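/- arXiv:2111.06113 — 7 statements merged into one kernel-verified Lean document; each statement's English description precedes it below -/
import Mathlib

section
/- Let K be a field, and let f₁, g₁ ∈ K[x], f₂, g₂ ∈ K[y] with f₁, g₁ coprime and f₂, g₂ coprime, all with max(deg fᵢ, deg gᵢ) ≥ 1. If x and y are elements of a field extension L of K satisfying f₁(x)g₂(y) = g₁(x)f₂(y) with g₁(x) ≠ 0, g₂(y) ≠ 0, and the degree of x over K(y) equals max(deg f₁, deg g₁), then the polynomial F(X) = f₁(X)g₂(y) − g₁(X)f₂(y) ∈ K(y)[X] is (up to a scalar in K(y)) the minimal polynomial of x over K(y), and hence is irreducible in K(y)[X]. -/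
/-!
`x` is a root of `F`, and
`deg F ≤ max (deg f₁) (deg g₁) = [K(y)(x) : K(y)] = deg (minpoly x)`, so once `F ≠ 0` the
monic minimal polynomial divides `F` and the degree bound forces `F = C c * minpoly x`.
If `F` vanished, `f₁ g₂(y) = g₁ f₂(y)` with `g₂(y) ≠ 0` and coprimality would make `g₁`,
and then `f₁`, constant.
-/

open Polynomial

namespace Polynomial

theorem natDegree_mul_C_sub_mul_C_le {R : Type*} [Ring R] (f g : R[X]) (a b : R) :
    (f * C a - g * C b).natDegree ≤ max f.natDegree g.natDegree :=
  (natDegree_sub_le _ _).trans (max_le_max (natDegree_mul_C_le f a) (natDegree_mul_C_le g b))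

theorem mul_C_sub_mul_C_ne_zero {k : Type*} [Field k] {f g : k[X]} (hfg : IsCoprime f g)
    {a : k} (ha : a ≠ 0) (b : k) (hdeg : 1 ≤ max f.natDegree g.natDegree) :
    f * C a - g * C b ≠ 0 := by
  intro h
  rw [sub_eq_zero] at h
  have hg : IsUnit g :=
    isUnit_of_dvd_unit (hfg.symm.dvd_of_dvd_mul_left ⟨C b, h⟩) (isUnit_C.mpr ha.isUnit)
  have hf : f = g * C (b * a⁻¹) := by
    rw [C_mul, ← mul_assoc, ← h, mul_assoc, ← C_mul, mul_inv_cancel₀ ha, C_1, mul_one]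
  have hg0 : g.natDegree = 0 := natDegree_eq_zero_of_isUnit hg
  have hf0 : f.natDegree ≤ 0 := hf ▸ (natDegree_mul_C_le g _).trans hg0.le
  omega

theorem aeval_map_mul_C_aeval_sub {K E L : Type*} [CommRing K] [CommRing E]
    [CommRing L] [Algebra K E] [Algebra K L] [Algebra E L] [IsScalarTower K E L]
    (f₁ g₁ f₂ g₂ : K[X]) (x : L) (e : E) :
    aeval x (f₁.map (algebraMap K E) * C (aeval e g₂) -
        g₁.map (algebraMap K E) * C (aeval e f₂)) =
      aeval x f₁ * aeval (algebraMap E L e) g₂ - aeval x g₁ * aeval (algebraMap E L e) f₂ := by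
  simp [aeval_algebraMap_apply]

end Polynomial

theorem IntermediateField.finrank_adjoin_simple_eq_natDegree_minpoly (K : Type*) {L : Type*}
    [Field K] [Field L] [Algebra K L] (x : L) :
    Module.finrank K (adjoin K {x}) = (minpoly K x).natDegree := by
  by_cases hx : IsIntegral K x
  · exact adjoin.finrank hx
  · rw [minpoly.eq_zero hx, natDegree_zero]
    refine Module.finrank_of_not_finite fun _ => hx ?_
    exact isIntegral_iff.mp (IsIntegral.of_finite K (AdjoinSimple.gen K x))

theorem minpoly.eq_C_leadingCoeff_mul {k A : Type*} [Field k] [Ring A] [Algebra k A] {x : A}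
    (hx : IsIntegral k x) {p : k[X]} (hp : Polynomial.aeval x p = 0)
    (hdeg : p.natDegree ≤ (minpoly k x).natDegree) : p = C p.leadingCoeff * minpoly k x :=
  eq_leadingCoeff_mul_of_monic_of_dvd_of_natDegree_le (minpoly.monic hx) (minpoly.dvd k x hp) hdeg

theorem stmt_2_general (K L : Type*) [Field K] [Field L] [Algebra K L]
    (f₁ g₁ f₂ g₂ : Polynomial K)
    (hcop₁ : IsCoprime f₁ g₁)
    (hd₁ : 1 ≤ max f₁.natDegree g₁.natDegree)
    (x y : L)
    (Ky : IntermediateField K L)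
    (yK : ↥Ky) (hyK : (yK : L) = y)
    (hg₂y : Polynomial.aeval y g₂ ≠ 0)
    (heq : Polynomial.aeval x f₁ * Polynomial.aeval y g₂ =
      Polynomial.aeval x g₁ * Polynomial.aeval y f₂)
    (hdegx : Module.finrank ↥Ky ↥(IntermediateField.adjoin (↥Ky) {x}) =
      max f₁.natDegree g₁.natDegree)
    (F : Polynomial ↥Ky)
    (hF : F = f₁.map (algebraMap K ↥Ky) * Polynomial.C (Polynomial.aeval yK g₂) -
      g₁.map (algebraMap K ↥Ky) * Polynomial.C (Polynomial.aeval yK f₂)) :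
    (∃ c : ↥Ky, c ≠ 0 ∧ F = Polynomial.C c * minpoly ↥Ky x) ∧ Irreducible F := by
  have hy : algebraMap Ky L yK = y := hyK
  have hc : aeval yK g₂ ≠ 0 := by
    rw [← hy, aeval_algebraMap_apply] at hg₂y
    exact ne_zero_of_map hg₂y
  have hroot : aeval x F = 0 := by
    rw [hF, aeval_map_mul_C_aeval_sub, hy, heq, sub_self]
  have hF0 : F ≠ 0 := by
    rw [hF]
    refine mul_C_sub_mul_C_ne_zero ((isCoprime_map _).mpr hcop₁) hc _ ?_
    rwa [natDegree_map, natDegree_map]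
  have hdeg : (minpoly Ky x).natDegree = max f₁.natDegree g₁.natDegree := by
    rw [← IntermediateField.finrank_adjoin_simple_eq_natDegree_minpoly, hdegx]
  have hint : IsIntegral Ky x :=
    minpoly.ne_zero_iff.mp fun h => by rw [h, natDegree_zero] at hdeg; omega
  have hFdeg : F.natDegree ≤ (minpoly Ky x).natDegree := by
    rw [hdeg, hF, ← natDegree_map (p := f₁) (algebraMap K Ky),
      ← natDegree_map (p := g₁) (algebraMap K Ky)]
    exact natDegree_mul_C_sub_mul_C_le _ _ _ _
  have hkey := minpoly.eq_C_leadingCoeff_mul hint hroot hFdeg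
  have hlc : F.leadingCoeff ≠ 0 := leadingCoeff_ne_zero.mpr hF0
  refine ⟨⟨_, hlc, hkey⟩, ?_⟩
  rw [hkey, irreducible_isUnit_mul (isUnit_C.mpr hlc.isUnit)]
  exact minpoly.irreducible hint

/-- Let `K` be a field, `f₁, g₁, f₂, g₂ ∈ K[X]` with `f₁,g₁` coprime, `f₂,g₂` coprime, each pair
not both constant. If `x, y ∈ L ⊇ K` satisfy `f₁(x)g₂(y) = g₁(x)f₂(y)` with `g₁(x) ≠ 0`,
`g₂(y) ≠ 0`, and the degree of `x` over `K(y)` equals `max (deg f₁) (deg g₁)`, then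
`F(X) = f₁(X)g₂(y) − g₁(X)f₂(y) ∈ K(y)[X]` is, up to a nonzero scalar of `K(y)`, the minimal
polynomial of `x` over `K(y)`, and hence irreducible in `K(y)[X]`. -/
theorem stmt_2 (K L : Type*) [Field K] [Field L] [Algebra K L]
    (f₁ g₁ f₂ g₂ : Polynomial K)
    (hcop₁ : IsCoprime f₁ g₁) (hcop₂ : IsCoprime f₂ g₂)
    (hd₁ : 1 ≤ max f₁.natDegree g₁.natDegree) (hd₂ : 1 ≤ max f₂.natDegree g₂.natDegree)
    (x y : L)
    (Ky : IntermediateField K L) (hKy : Ky = IntermediateField.adjoin K {y})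
    (yK : ↥Ky) (hyK : (yK : L) = y)
    (hg₁x : Polynomial.aeval x g₁ ≠ 0) (hg₂y : Polynomial.aeval y g₂ ≠ 0)
    (heq : Polynomial.aeval x f₁ * Polynomial.aeval y g₂ =
      Polynomial.aeval x g₁ * Polynomial.aeval y f₂)
    (hdegx : Module.finrank ↥Ky ↥(IntermediateField.adjoin (↥Ky) {x}) =
      max f₁.natDegree g₁.natDegree)
    (F : Polynomial ↥Ky)
    (hF : F = f₁.map (algebraMap K ↥Ky) * Polynomial.C (Polynomial.aeval yK g₂) -
      g₁.map (algebraMap K ↥Ky) * Polynomial.C (Polynomial.aeval yK f₂)) :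
    (∃ c : ↥Ky, c ≠ 0 ∧ F = Polynomial.C c * minpoly ↥Ky x) ∧ Irreducible F :=
  stmt_2_general K L f₁ g₁ f₂ g₂ hcop₁ hd₁ x y Ky yK hyK hg₂y heq hdegx F hF
end

section
/- Let h(x) = f(x)/g(x) ∈ F_q(x) with f, g ∈ F_q[x] coprime and n = max(deg f, deg g) ≥ 1. Suppose the extension F_q(x)/F_q(h) is Galois of degree n, with all automorphisms defined over F_q. Then the value set V_h = { h(α) : α ∈ P¹(F_q) } ⊆ P¹(F_q) satisfies ⌈(q+1)/n⌉ ≤ #V_h ≤ ⌈(q+1)/n⌉ + 1. -/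
/-!
Every `K`-automorphism `σ` of `K(X)` is a Möbius substitution `σ X = γ(X)`: `σ X` generates
`K(X)`, so by the degree formula `[K(X) : K(u)] = max (deg num u, deg denom u)` it has degree
one. Hence `σ ↦ [γ]` embeds `Aut_K K(X)` into `PGL(2, K)`, which acts on `P¹(K)`. Let `F`, `G`
be the forms of degree `n` homogenizing `f`, `g`. If `σ` fixes `h = f / g`, then
`F(γ v) G(v) = G(γ v) F(v)`, so `h(γ α) = h(α)` on `P¹(K)`: `h` is constant on the orbits of
`Gal(K(X)/K(h))`, whence `#V_h ≤ #orbits`. A non-identity Möbius transformation fixes at most two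
points, so Burnside's lemma gives `#orbits · n ≤ (q + 1) + 2 (n - 1)`. For the lower bound, the
fibre of `h` over `[u : w]` consists of zeros on `P¹(K)` of the nonzero form `w F - u G` of
degree `n`, so `q + 1 ≤ n · #V_h`.
-/

open Polynomial OnePoint MatrixGroups

lemma Matrix.GeneralLinearGroup.det_fin_two_ne_zero {K : Type*} [Field K] (γ : GL (Fin 2) K) :
    γ 0 0 * γ 1 1 - γ 0 1 * γ 1 0 ≠ 0 := by
  simpa [Matrix.det_fin_two] using γ.det_ne_zero

lemma Nat.card_le_mul_ncard_range {X Y : Type*} [Finite X] {F : X → Y} {n : ℕ}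
    (h : ∀ y, (F ⁻¹' {y}).ncard ≤ n) : Nat.card X ≤ n * (Set.range F).ncard := by
  classical
  have := Fintype.ofFinite X
  rw [Nat.card_eq_fintype_card, ← Finset.card_univ, ← Set.image_univ, ← Finset.coe_univ,
    ← Finset.coe_image, Set.ncard_coe_finset]
  refine Finset.card_le_mul_card_image _ n fun y _ => ?_
  rw [← Set.ncard_coe_finset]
  convert h y
  ext; simp

lemma Nat.add_div_le_of_succ_le_mul {q n k : ℕ} (hn : 0 < n) (h : q + 1 ≤ n * k) :
    (q + n) / n ≤ k :=
  Nat.lt_succ_iff.mp ((Nat.div_lt_iff_lt_mul hn).mpr (by rw [Nat.succ_mul]; nlinarith))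

lemma Nat.le_add_div_add_one_of_mul_le {q n k : ℕ} (hn : 0 < n)
    (h : k * n ≤ q + 1 + (n - 1) * 2) : k ≤ (q + n) / n + 1 := by
  rw [← Nat.add_div_right _ hn, Nat.le_div_iff_mul_le hn]
  omega

namespace MulAction

variable {G X : Type*} [Group G] [MulAction G X]

lemma ncard_range_le_card_orbits [Finite X] {Y : Type*} {F : X → Y}
    (hF : ∀ (g : G) (x : X), F (g • x) = F x) :
    (Set.range F).ncard ≤ Nat.card (orbitRel.Quotient G X) := by
  have hlift : ∀ x y : X, orbitRel G X x y → F x = F y := by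
    rintro _ y ⟨g, rfl⟩
    exact hF g y
  rw [← Set.range_quotient_lift (s := orbitRel G X) hlift, ← Set.image_univ]
  exact (Set.ncard_image_le (Set.toFinite _)).trans (Set.ncard_univ _).le

lemma card_orbits_mul_card_le [Finite G] [Finite X] {k : ℕ}
    (hfix : ∀ g : G, g ≠ 1 → (fixedBy X g).ncard ≤ k) :
    Nat.card (orbitRel.Quotient G X) * Nat.card G ≤ Nat.card X + (Nat.card G - 1) * k := by
  classical
  have := Fintype.ofFinite G
  have := Fintype.ofFinite X
  have := Fintype.ofFinite (orbitRel.Quotient G X)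
  simp only [Nat.card_eq_fintype_card]
  rw [← sum_card_fixedBy_eq_card_orbits_mul_card_group,
    ← Finset.add_sum_erase _ _ (Finset.mem_univ 1)]
  gcongr
  · exact (Fintype.card_subtype_le _).trans_eq rfl
  · calc _ ≤ (Finset.univ.erase (1 : G)).card • k :=
          Finset.sum_le_card_nsmul _ _ _ fun g hg => by
            rw [← Nat.card_eq_fintype_card, Nat.card_coe_set_eq]
            exact hfix g (Finset.ne_of_mem_erase hg)
      _ = _ := by rw [Finset.card_erase_of_mem (Finset.mem_univ _), smul_eq_mul, Finset.card_univ]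

end MulAction

namespace OnePoint

lemma smul_invariant_of_forall_coe {K G Y : Type*} [Group G] [MulAction G (OnePoint K)]
    {F : OnePoint K → Y} (hF : ∀ (g : G) (x : K), F (g • (x : OnePoint K)) = F x) (g : G)
    (α : OnePoint K) : F (g • α) = F α := by
  cases α with
  | coe x => exact hF g x
  | infty =>
    cases h : g • (∞ : OnePoint K) with
    | infty => rfl
    | coe y =>
      -- `g⁻¹` moves the finite point `y` to `∞`
      rw [← hF g⁻¹ y, ← h, inv_smul_smul]

variable {K : Type*} [Field K]

open scoped Classical in
/-- The point `[u : v]` of `P¹(K)`; the junk value at `[0 : 0]` is `∞`. -/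
noncomputable def ratio (u v : K) : OnePoint K := if v = 0 then ∞ else ↑(u / v)

@[simp] lemma ratio_zero_right (u : K) : ratio u 0 = ∞ := by simp [ratio]

lemma ratio_of_ne_zero {v : K} (u : K) (hv : v ≠ 0) : ratio u v = ↑(u / v) := by
  simp [ratio, hv]

@[simp] lemma ratio_one_right (x : K) : ratio x 1 = x := by simp [ratio]

lemma ratio_mul_mul {c : K} (hc : c ≠ 0) (u v : K) : ratio (c * u) (c * v) = ratio u v := by
  by_cases hv : v = 0
  · simp [hv]
  · rw [ratio_of_ne_zero _ hv, ratio_of_ne_zero _ (mul_ne_zero hc hv), mul_div_mul_left _ _ hc]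

lemma ratio_eq_ratio_iff {u v u' v' : K} (h : u ≠ 0 ∨ v ≠ 0) (h' : u' ≠ 0 ∨ v' ≠ 0) :
    ratio u v = ratio u' v' ↔ u * v' = v * u' := by
  by_cases hv : v = 0 <;> by_cases hv' : v' = 0
  · simp [hv, hv']
  · simp [hv, ratio_of_ne_zero _ hv', h.resolve_right (not_not.mpr hv), hv']
  · simp [hv', ratio_of_ne_zero _ hv, h'.resolve_right (not_not.mpr hv'), hv]
  · rw [ratio_of_ne_zero _ hv, ratio_of_ne_zero _ hv', coe_eq_coe, div_eq_div_iff hv hv',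
      mul_comm v]

lemma exists_eq_ratio (α : OnePoint K) : ∃ u v : K, (u ≠ 0 ∨ v ≠ 0) ∧ α = ratio u v := by
  cases α with
  | infty => exact ⟨1, 0, by simp⟩
  | coe x => exact ⟨x, 1, by simp⟩

/-- `S` lies in the zero set on `P¹(K)` of the binary form of degree `n` dehomogenizing to `P`;
`∞` is such a zero iff `P` has degree `< n`. -/
lemma ncard_le_of_isRoot {P : K[X]} (hP : P ≠ 0) {n : ℕ} (hn : P.natDegree ≤ n)
    {S : Set (OnePoint K)} (hfin : ∀ x : K, ↑x ∈ S → P.IsRoot x) (hinf : ∞ ∈ S → P.coeff n = 0) :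
    S.ncard ≤ n := by
  classical
  set R : Set (OnePoint K) := (↑) '' (P.roots.toFinset : Set K)
  have hRfin : R.Finite := P.roots.toFinset.finite_toSet.image _
  have hR : R.ncard ≤ P.natDegree := by
    rw [Set.ncard_image_of_injective _ coe_injective, Set.ncard_coe_finset]
    exact (Multiset.toFinset_card_le _).trans (card_roots' P)
  have hsub : S ⊆ insert ∞ R := by
    rintro (_ | x) hx
    · exact Set.mem_insert _ _
    · exact Set.mem_insert_of_mem _ ⟨x, by simpa [mem_roots hP] using hfin x hx, rfl⟩
  by_cases h : ∞ ∈ S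
  · have hlt : P.natDegree < n := hn.lt_of_ne fun hdeg => hP <| leadingCoeff_eq_zero.mp <| by
      rw [leadingCoeff, hdeg, hinf h]
    calc S.ncard ≤ (insert ∞ R).ncard := Set.ncard_le_ncard hsub (hRfin.insert _)
      _ ≤ R.ncard + 1 := Set.ncard_insert_le _ _
      _ ≤ n := by omega
  · calc S.ncard ≤ R.ncard :=
          Set.ncard_le_ncard (fun α hα => (hsub hα).resolve_left (ne_of_mem_of_not_mem hα h)) hRfin
      _ ≤ n := hR.trans hn

variable [DecidableEq K]

lemma smul_coe_eq_ratio (γ : GL (Fin 2) K) (x : K) :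
    γ • (x : OnePoint K) = ratio (γ 0 0 * x + γ 0 1) (γ 1 0 * x + γ 1 1) := by
  rw [smul_some_eq_ite, ratio]
  congr

instance : MulAction PGL(2, K) (OnePoint K) := (equivProjectivization K).mulAction _

lemma _root_.Matrix.ProjGenLinGroup.mk_smul_onePoint (γ : GL (Fin 2) K) (α : OnePoint K) :
    Matrix.ProjGenLinGroup.mk γ • α = γ • α := rfl

lemma ncard_fixedBy_le_two {γ : GL (Fin 2) K} (hγ : γ ∉ Subgroup.center (GL (Fin 2) K)) :
    (MulAction.fixedBy (OnePoint K) γ).ncard ≤ 2 := by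
  refine ncard_le_of_isRoot (P := γ.fixpointPolynomial) ?_ ?_ (fun x hx => ?_) (fun h => ?_)
  · rwa [Ne, Matrix.GeneralLinearGroup.fixpointPolynomial_eq_zero_iff,
      ← Matrix.GeneralLinearGroup.mem_center_iff_val_mem_range_scalar]
  · rw [Matrix.GeneralLinearGroup.fixpointPolynomial]
    compute_degree!
  · rwa [IsRoot, ← coe_aeval_eq_eval,
      Matrix.GeneralLinearGroup.fixpointPolynomial_aeval_eq_zero_iff]
  · rw [MulAction.mem_fixedBy, smul_infty_eq_self_iff] at h
    simp [Matrix.GeneralLinearGroup.fixpointPolynomial, h]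

lemma _root_.Matrix.ProjGenLinGroup.ncard_fixedBy_le_two {p : PGL(2, K)} (hp : p ≠ 1) :
    (MulAction.fixedBy (OnePoint K) p).ncard ≤ 2 := by
  induction p using Matrix.ProjGenLinGroup.induction_on with | mk γ =>
  exact OnePoint.ncard_fixedBy_le_two (mt Matrix.ProjGenLinGroup.mk_eq_one.mpr hp)

end OnePoint

namespace Polynomial

variable {K : Type*} [Field K]

lemma linear_mul_linear (a b c d : K) :
    (C a * X + C b) * (C c * X + C d) = C (a * c) * X ^ 2 + C (a * d + b * c) * X + C (b * d) := by
  simp only [C_mul, C_add]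
  ring

lemma det_ne_zero_of_isCoprime {a b c d : K} (ha : a ≠ 0)
    (h : IsCoprime (C a * X + C b) (C c * X + C d)) : a * d - b * c ≠ 0 := by
  intro hdet
  have hdvd : C a * X + C b ∣ C c * X + C d := by
    have hd : c / a * b = d := by field_simp; linear_combination -hdet
    refine ⟨C (c / a), ?_⟩
    rw [← hd, C_mul]
    nth_rewrite 1 [← div_mul_cancel₀ c ha]
    rw [C_mul]
    ring
  have := natDegree_eq_zero_of_isUnit (h.isUnit_of_dvd' dvd_rfl hdvd)
  rw [natDegree_linear ha] at this
  exact one_ne_zero this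

lemma eval_ne_zero_or_of_isCoprime {f g : K[X]} (hcop : IsCoprime f g) (x : K) :
    f.eval x ≠ 0 ∨ g.eval x ≠ 0 := by
  by_contra! h
  have := hcop.map (evalRingHom x)
  rw [coe_evalRingHom, h.1, h.2] at this
  exact not_isCoprime_zero_zero this

lemma coeff_ne_zero_or_of_isCoprime {f g : K[X]} (hcop : IsCoprime f g) :
    f.coeff (max f.natDegree g.natDegree) ≠ 0 ∨ g.coeff (max f.natDegree g.natDegree) ≠ 0 := by
  wlog h : f.natDegree ≤ g.natDegree generalizing f g
  · rw [max_comm, or_comm]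
    exact this hcop.symm (le_of_not_ge h)
  rcases eq_or_ne g 0 with rfl | hg
  · have hf : f ≠ 0 := by
      rintro rfl
      exact not_isCoprime_zero_zero hcop
    left
    rw [natDegree_zero] at h ⊢
    rw [Nat.le_zero.mp h, max_self, ← Nat.le_zero.mp h, coeff_natDegree]
    exact leadingCoeff_ne_zero.mpr hf
  · right
    rw [max_eq_right h, coeff_natDegree]
    exact leadingCoeff_ne_zero.mpr hg

lemma C_mul_sub_C_mul_ne_zero {f g : K[X]} (hcop : IsCoprime f g)
    (hdeg : max f.natDegree g.natDegree ≠ 0) {u w : K} (huw : u ≠ 0 ∨ w ≠ 0) :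
    C w * f - C u * g ≠ 0 := by
  intro h
  rw [sub_eq_zero] at h
  apply hdeg
  rcases eq_or_ne w 0 with rfl | hw
  · have hg : g = 0 := by simpa [huw.resolve_right (not_not.mpr rfl)] using h.symm
    subst hg
    simp [natDegree_eq_zero_of_isUnit (isCoprime_zero_right.mp hcop)]
  · have hfg : f = C (u / w) * g := by
      rw [div_eq_inv_mul, C_mul, mul_assoc, ← h, ← mul_assoc, ← C_mul, inv_mul_cancel₀ hw, C_1,
        one_mul]
    have hg := natDegree_eq_zero_of_isUnit (hcop.isUnit_of_dvd' (hfg ▸ dvd_mul_left _ _) dvd_rfl)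
    rw [hfg, hg, Nat.le_zero.mp ((natDegree_C_mul_le _ _).trans hg.le), max_self]

lemma eval_homogenize_zero_right (p : K[X]) (n : ℕ) (u : K) :
    MvPolynomial.eval ![u, 0] (p.homogenize n) = p.coeff n * u ^ n := by
  rw [homogenize, MvPolynomial.eval_sum, Finset.sum_eq_single (n, 0)]
  · simp [MvPolynomial.eval_monomial]
  · rintro ⟨k, l⟩ hkl hne
    have hl : l ≠ 0 := by
      rintro rfl
      simp_all
    rw [MvPolynomial.eval_monomial, Finsupp.update_eq_add_single (by simp),
      Finsupp.prod_add_index' (by simp) (fun _ _ _ => pow_add _ _ _),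
      Finsupp.prod_single_index (by simp), Finsupp.prod_single_index (by simp)]
    simp [zero_pow hl]
  · simp

lemma eval_homogenize_of_ne_zero {p : K[X]} {n : ℕ} (hp : p.natDegree ≤ n) (u : K) {v : K}
    (hv : v ≠ 0) : MvPolynomial.eval ![u, v] (p.homogenize n) = v ^ n * p.eval (u / v) := by
  rw [eval_homogenize hp _ hv, mul_comm]
  rfl

lemma aeval_homogenize_of_ne_zero {L : Type*} [Field L] [Algebra K L] {p : K[X]} {n : ℕ}
    (hp : p.natDegree ≤ n) (y : Fin 2 → L) (hy : y 1 ≠ 0) :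
    MvPolynomial.aeval y (p.homogenize n) = y 1 ^ n * aeval (y 0 / y 1) p := by
  rw [MvPolynomial.aeval_def, ← MvPolynomial.eval_map, ← homogenize_map,
    eval_homogenize ((natDegree_map_le).trans hp) _ hy, eval_map_algebraMap, mul_comm]

lemma eval_homogenize_ne_zero_or {f g : K[X]} (hcop : IsCoprime f g) {u v : K}
    (huv : u ≠ 0 ∨ v ≠ 0) :
    MvPolynomial.eval ![u, v] (f.homogenize (max f.natDegree g.natDegree)) ≠ 0 ∨
      MvPolynomial.eval ![u, v] (g.homogenize (max f.natDegree g.natDegree)) ≠ 0 := by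
  by_cases hv : v = 0
  · have hu : u ≠ 0 := huv.resolve_right (not_not.mpr hv)
    simp only [hv, eval_homogenize_zero_right, ne_eq, mul_eq_zero, pow_eq_zero_iff', hu,
      false_and, or_false]
    exact coeff_ne_zero_or_of_isCoprime hcop
  · rw [eval_homogenize_of_ne_zero (le_max_left _ _) _ hv,
      eval_homogenize_of_ne_zero (le_max_right _ _) _ hv]
    simpa [hv] using eval_ne_zero_or_of_isCoprime hcop (u / v)

end Polynomial

namespace RatFunc

variable {K : Type*} [Field K]

noncomputable def mobius (γ : GL (Fin 2) K) : RatFunc K :=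
  (C (γ 0 0) * X + C (γ 0 1)) / (C (γ 1 0) * X + C (γ 1 1))

lemma linear_eq_algebraMap (a b : K) :
    C a * X + C b = algebraMap K[X] (RatFunc K) (.C a * .X + .C b) := by
  simp

lemma mobius_denom_ne_zero (γ : GL (Fin 2) K) : C (γ 1 0) * X + C (γ 1 1) ≠ (0 : RatFunc K) := by
  rw [linear_eq_algebraMap, Ne, map_eq_zero_iff _ (IsFractionRing.injective K[X] (RatFunc K))]
  intro h
  have h1 := congrArg (Polynomial.coeff · 1) h
  have h0 := congrArg (Polynomial.coeff · 0) h
  simp only [coeff_add, coeff_C_mul, coeff_X, coeff_C] at h1 h0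
  norm_num at h1 h0
  exact γ.det_fin_two_ne_zero (by simp [h1, h0])

@[simp] lemma mobius_one : mobius (1 : GL (Fin 2) K) = X := by simp [mobius]

lemma map_mobius {σ : RatFunc K →ₐ[K] RatFunc K} {δ : GL (Fin 2) K} (hσ : σ X = mobius δ)
    (γ : GL (Fin 2) K) : σ (mobius γ) = mobius (γ * δ) := by
  have hC : ∀ a : K, σ (C a) = C a := fun a => by rw [← algebraMap_eq_C, σ.commutes]
  have hδ := mobius_denom_ne_zero δ
  simp only [mobius, map_div₀, map_add, map_mul, hC, hσ]
  simp only [Units.val_mul, Matrix.mul_apply, Fin.sum_univ_two, map_add, map_mul]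
  set D := C (δ 1 0) * X + C (δ 1 1)
  set N := C (δ 0 0) * X + C (δ 0 1)
  have hfrac : ∀ a b : K, C a * (N / D) + C b = (C a * N + C b * D) / D := fun a b => by
    field_simp
  rw [hfrac, hfrac, div_div_div_cancel_right₀ hδ]
  congr 1 <;> ring

lemma mobius_eq_mobius_iff {γ γ' : GL (Fin 2) K} :
    mobius γ = mobius γ' ↔ Matrix.ProjGenLinGroup.mk γ = .mk γ' := by
  rw [Matrix.ProjGenLinGroup.mk_eq_mk_iff]
  constructor
  · intro h
    rw [mobius, mobius, div_eq_div_iff (mobius_denom_ne_zero γ) (mobius_denom_ne_zero γ'),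
      linear_eq_algebraMap, linear_eq_algebraMap, linear_eq_algebraMap, linear_eq_algebraMap,
      ← map_mul, ← map_mul, linear_mul_linear, linear_mul_linear] at h
    have h := IsFractionRing.injective K[X] (RatFunc K) h
    have e0 := congrArg (Polynomial.coeff · 0) h
    have e1 := congrArg (Polynomial.coeff · 1) h
    have e2 := congrArg (Polynomial.coeff · 2) h
    simp only [coeff_add, coeff_C_mul, coeff_X_pow, coeff_X, coeff_C] at e0 e1 e2
    norm_num at e0 e1 e2
    have hdet := γ.det_fin_two_ne_zero
    have hdet' := γ'.det_fin_two_ne_zero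
    -- if `γ' = u γ` then `a' d - b' c = u (a d - b c)`
    refine ⟨Units.mk0 ((γ' 0 0 * γ 1 1 - γ' 0 1 * γ 1 0) / (γ 0 0 * γ 1 1 - γ 0 1 * γ 1 0)) ?_, ?_⟩
    · refine div_ne_zero (fun h0 => hdet' ?_) hdet
      grind
    · ext i j
      fin_cases i <;> fin_cases j <;> simp [Matrix.mul_apply] <;> field_simp <;> grind
  · rintro ⟨u, rfl⟩
    have hu : (C (u : K) : RatFunc K) ≠ 0 := by simp
    have hentry : ∀ i j,
        ((γ * .scalar (Fin 2) u : GL (Fin 2) K) : Matrix (Fin 2) (Fin 2) K) i j = γ i j * u := by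
      simp
    rw [mobius, mobius, hentry, hentry, hentry, hentry]
    simp only [map_mul]
    rw [← mul_div_mul_left _ _ hu]
    congr 1 <;> ring

lemma exists_mobius (σ : RatFunc K ≃ₐ[K] RatFunc K) : ∃ γ : GL (Fin 2) K, σ X = mobius γ := by
  set u := σ X
  have htop : IntermediateField.adjoin K {u} = ⊤ := by
    rw [show ({u} : Set (RatFunc K)) = σ.toAlgHom '' {X} by simp [u],
      ← IntermediateField.adjoin_map, adjoin_X, ← AlgHom.fieldRange_eq_map,
      AlgEquiv.fieldRange_eq_top]
  have hdeg : max u.num.natDegree u.denom.natDegree = 1 := by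
    rw [← u.finrank_eq_max_natDegree, htop, IntermediateField.finrank_top]
  have hnum := eq_X_add_C_of_natDegree_le_one (p := u.num) (by omega)
  have hdenom := eq_X_add_C_of_natDegree_le_one (p := u.denom) (by omega)
  set a := u.num.coeff 1
  set b := u.num.coeff 0
  set c := u.denom.coeff 1
  set d := u.denom.coeff 0
  have hcop : IsCoprime (.C a * .X + .C b : K[X]) (.C c * .X + .C d) :=
    hnum ▸ hdenom ▸ u.isCoprime_num_denom
  have hdet : a * d - b * c ≠ 0 := by
    by_cases ha : a = 0
    · have hc : c ≠ 0 := by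
        rintro hc
        rw [ha] at hnum
        rw [hc] at hdenom
        simp only [map_zero, zero_mul, zero_add] at hnum hdenom
        rw [hnum, hdenom, natDegree_C, natDegree_C] at hdeg
        exact zero_ne_one hdeg
      have := det_ne_zero_of_isCoprime hc hcop.symm
      contrapose! this
      linear_combination -this
    · exact det_ne_zero_of_isCoprime ha hcop
  refine ⟨.mkOfDetNeZero !![a, b; c, d] (by simpa [Matrix.det_fin_two_of] using hdet), ?_⟩
  rw [← u.num_div_denom, hnum, hdenom]
  simp [mobius]

lemma algHom_ext {L : Type*} [Semiring L] [Algebra K L] {φ ψ : RatFunc K →ₐ[K] L}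
    (h : φ X = ψ X) : φ = ψ :=
  IsLocalization.algHom_ext (nonZeroDivisors K[X]) (Polynomial.algHom_ext (by simpa))

lemma algHom_algebraMap {L : Type*} [Semiring L] [Algebra K L] (σ : RatFunc K →ₐ[K] L)
    (p : K[X]) : σ (algebraMap K[X] (RatFunc K) p) = aeval (σ X) p := by
  rw [← aeval_X_left_eq_algebraMap, aeval_algHom_apply]

noncomputable def mobiusMatrix (σ : RatFunc K ≃ₐ[K] RatFunc K) : GL (Fin 2) K :=
  (exists_mobius σ).choose

lemma mk_mobiusMatrix {σ : RatFunc K ≃ₐ[K] RatFunc K} {γ : GL (Fin 2) K} (h : σ X = mobius γ) :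
    Matrix.ProjGenLinGroup.mk (mobiusMatrix σ) = .mk γ :=
  mobius_eq_mobius_iff.mp ((exists_mobius σ).choose_spec.symm.trans h)

/-- `σ ↦ [γ]` where `σ⁻¹ X = γ(X)`: the inverse is needed since `σ ↦ γ` reverses products. -/
noncomputable def autToPGL : (RatFunc K ≃ₐ[K] RatFunc K) →* PGL(2, K) where
  toFun σ := .mk (mobiusMatrix σ⁻¹)
  map_one' := mk_mobiusMatrix (by simp)
  map_mul' σ τ := by
    obtain ⟨γ, hγ⟩ := exists_mobius σ⁻¹
    obtain ⟨δ, hδ⟩ := exists_mobius τ⁻¹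
    have hστ : (σ * τ)⁻¹ X = mobius (γ * δ) := by
      rw [mul_inv_rev, AlgEquiv.mul_apply, hγ]
      exact map_mobius (σ := (τ⁻¹ : RatFunc K ≃ₐ[K] RatFunc K).toAlgHom) hδ γ
    simp only [mk_mobiusMatrix hστ, mk_mobiusMatrix hγ, mk_mobiusMatrix hδ, map_mul]

lemma autToPGL_eq {σ : RatFunc K ≃ₐ[K] RatFunc K} {γ : GL (Fin 2) K} (h : σ⁻¹ X = mobius γ) :
    autToPGL σ = .mk γ :=
  mk_mobiusMatrix h

lemma autToPGL_injective : Function.Injective (autToPGL (K := K)) := by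
  refine (injective_iff_map_eq_one _).mpr fun σ hσ => ?_
  obtain ⟨γ, hγ⟩ := exists_mobius σ⁻¹
  rw [autToPGL_eq hγ, ← Matrix.ProjGenLinGroup.mk_one, ← mobius_eq_mobius_iff, mobius_one] at hσ
  rw [← inv_eq_one]
  exact AlgEquiv.coe_toAlgHom_injective (algHom_ext (hγ.trans hσ))

lemma eval_homogenize_mul_eval_eq {f g : K[X]} {n : ℕ} (hf : f.natDegree ≤ n)
    (hg : g.natDegree ≤ n) {σ : RatFunc K →ₐ[K] RatFunc K} {γ : GL (Fin 2) K}
    (hσ : σ X = mobius γ)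
    (ht : σ (algebraMap K[X] (RatFunc K) f / algebraMap K[X] (RatFunc K) g) =
      algebraMap K[X] (RatFunc K) f / algebraMap K[X] (RatFunc K) g) (x : K) :
    MvPolynomial.eval ![γ 0 0 * x + γ 0 1, γ 1 0 * x + γ 1 1] (f.homogenize n) * g.eval x =
      MvPolynomial.eval ![γ 0 0 * x + γ 0 1, γ 1 0 * x + γ 1 1] (g.homogenize n) * f.eval x := by
  rcases eq_or_ne g 0 with rfl | hg0
  · simp
  set L : Fin 2 → K[X] := ![.C (γ 0 0) * .X + .C (γ 0 1), .C (γ 1 0) * .X + .C (γ 1 1)]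
  have hL : σ X = algebraMap K[X] (RatFunc K) (L 0) / algebraMap K[X] (RatFunc K) (L 1) := by
    simp [hσ, mobius, L]
  have hL1 : algebraMap K[X] (RatFunc K) (L 1) ≠ 0 := by simpa [L] using mobius_denom_ne_zero γ
  have hform : ∀ p : K[X], p.natDegree ≤ n →
      σ (algebraMap K[X] (RatFunc K) p) * algebraMap K[X] (RatFunc K) (L 1) ^ n =
        algebraMap K[X] (RatFunc K) (MvPolynomial.aeval L (p.homogenize n)) := fun p hp => by
    rw [← MvPolynomial.aeval_algebraMap_apply, aeval_homogenize_of_ne_zero hp _ hL1,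
      algHom_algebraMap, hL, mul_comm]
    rfl
  have hg0' : algebraMap K[X] (RatFunc K) g ≠ 0 := by simpa using hg0
  have hσg : σ (algebraMap K[X] (RatFunc K) g) ≠ 0 := by
    simpa using (map_ne_zero_iff _ σ.toRingHom.injective).mpr hg0'
  rw [map_div₀, div_eq_div_iff hσg hg0'] at ht
  have hpoly : MvPolynomial.aeval L (f.homogenize n) * g =
      MvPolynomial.aeval L (g.homogenize n) * f := by
    apply IsFractionRing.injective K[X] (RatFunc K)
    rw [map_mul, map_mul, ← hform f hf, ← hform g hg]
    linear_combination algebraMap K[X] (RatFunc K) (L 1) ^ n * ht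
  have hevalL : (fun i => (L i).eval x) = ![γ 0 0 * x + γ 0 1, γ 1 0 * x + γ 1 1] := by
    ext i
    fin_cases i <;> simp [L]
  have := congrArg (aeval x) hpoly
  simp only [map_mul, MvPolynomial.comp_aeval_apply, coe_aeval_eq_eval, hevalL] at this
  exact this

end RatFunc

namespace Polynomial

variable {K : Type*} [Field K]

/-- For `n = max (deg f) (deg g)`, the map of `P¹(K)` induced by `f / g`. -/
noncomputable def ratioMap (n : ℕ) (f g : K[X]) (α : OnePoint K) : OnePoint K :=
  α.elim (ratio (f.coeff n) (g.coeff n)) fun x => ratio (f.eval x) (g.eval x)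

@[simp] lemma ratioMap_infty (n : ℕ) (f g : K[X]) :
    ratioMap n f g ∞ = ratio (f.coeff n) (g.coeff n) := rfl

@[simp] lemma ratioMap_coe (n : ℕ) (f g : K[X]) (x : K) :
    ratioMap n f g x = ratio (f.eval x) (g.eval x) := rfl

lemma ratioMap_infty_eq_ite {f g : K[X]} (hg : g ≠ 0) :
    ratioMap (max f.natDegree g.natDegree) f g ∞ =
      if g.natDegree < f.natDegree then ∞
      else if f.natDegree < g.natDegree then ((0 : K) : OnePoint K)
      else ((f.leadingCoeff / g.leadingCoeff : K) : OnePoint K) := by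
  have hlc := leadingCoeff_ne_zero.mpr hg
  rw [ratioMap_infty]
  split_ifs with hgf hfg
  · rw [max_eq_left hgf.le, coeff_eq_zero_of_natDegree_lt hgf, ratio_zero_right]
  · rw [max_eq_right hfg.le, coeff_eq_zero_of_natDegree_lt hfg, ← leadingCoeff,
      ratio_of_ne_zero _ hlc, zero_div]
  · have hdeg : f.natDegree = g.natDegree := by omega
    rw [hdeg, max_self, ← leadingCoeff, ← hdeg, ← leadingCoeff, ratio_of_ne_zero _ hlc]

lemma ratioMap_ratio {n : ℕ} {f g : K[X]} (hf : f.natDegree ≤ n) (hg : g.natDegree ≤ n)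
    {u v : K} (huv : u ≠ 0 ∨ v ≠ 0) :
    ratioMap n f g (ratio u v) = ratio (MvPolynomial.eval ![u, v] (f.homogenize n))
      (MvPolynomial.eval ![u, v] (g.homogenize n)) := by
  by_cases hv : v = 0
  · have hu : u ≠ 0 := huv.resolve_right (not_not.mpr hv)
    rw [hv, ratio_zero_right, eval_homogenize_zero_right, eval_homogenize_zero_right,
      mul_comm _ (u ^ n), mul_comm _ (u ^ n), ratio_mul_mul (pow_ne_zero n hu), ratioMap_infty]
  · rw [eval_homogenize_of_ne_zero hf _ hv, eval_homogenize_of_ne_zero hg _ hv,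
      ratio_mul_mul (pow_ne_zero n hv), ratio_of_ne_zero _ hv, ratioMap_coe]

lemma ncard_preimage_ratioMap_le {f g : K[X]} (hcop : IsCoprime f g) {n : ℕ}
    (hn : n = max f.natDegree g.natDegree) (hn0 : n ≠ 0) (c : OnePoint K) :
    (ratioMap n f g ⁻¹' {c}).ncard ≤ n := by
  obtain ⟨u, w, huw, rfl⟩ := exists_eq_ratio c
  refine ncard_le_of_isRoot (P := C w * f - C u * g) (C_mul_sub_C_mul_ne_zero hcop (hn ▸ hn0) huw)
    ?_ (fun x hx => ?_) (fun h => ?_)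
  · rw [hn]
    exact (natDegree_sub_le _ _).trans
      (max_le_max (natDegree_C_mul_le _ _) (natDegree_C_mul_le _ _))
  · rw [Set.mem_preimage, Set.mem_singleton_iff, ratioMap_coe,
      ratio_eq_ratio_iff (eval_ne_zero_or_of_isCoprime hcop x) huw] at hx
    simp only [IsRoot, eval_sub, eval_mul, eval_C]
    linear_combination hx
  · rw [Set.mem_preimage, Set.mem_singleton_iff, ratioMap_infty,
      ratio_eq_ratio_iff (hn ▸ coeff_ne_zero_or_of_isCoprime hcop) huw] at h
    simp only [coeff_sub, coeff_C_mul]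
    linear_combination h

lemma ratioMap_smul_coe [DecidableEq K] {f g : K[X]} (hcop : IsCoprime f g) {n : ℕ}
    (hn : n = max f.natDegree g.natDegree) {σ : RatFunc K →ₐ[K] RatFunc K} {γ : GL (Fin 2) K}
    (hσ : σ RatFunc.X = RatFunc.mobius γ)
    (ht : σ (algebraMap K[X] (RatFunc K) f / algebraMap K[X] (RatFunc K) g) =
      algebraMap K[X] (RatFunc K) f / algebraMap K[X] (RatFunc K) g) (x : K) :
    ratioMap n f g (γ • (x : OnePoint K)) = ratioMap n f g x := by
  have hw : γ 0 0 * x + γ 0 1 ≠ 0 ∨ γ 1 0 * x + γ 1 1 ≠ 0 := by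
    by_contra! h
    exact γ.det_fin_two_ne_zero (by linear_combination γ 0 0 * h.2 - γ 1 0 * h.1)
  have hf : f.natDegree ≤ n := hn ▸ le_max_left _ _
  have hg : g.natDegree ≤ n := hn ▸ le_max_right _ _
  rw [smul_coe_eq_ratio, ratioMap_ratio hf hg hw, ratioMap_coe,
    ratio_eq_ratio_iff (hn ▸ eval_homogenize_ne_zero_or hcop hw)
      (eval_ne_zero_or_of_isCoprime hcop x)]
  exact RatFunc.eval_homogenize_mul_eval_eq hf hg hσ ht x

lemma eq_ratioMap {f g : K[X]} (hg : g ≠ 0) {H : OnePoint K → OnePoint K}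
    (hH1 : ∀ α : K, g.eval α ≠ 0 → H α = ((f.eval α / g.eval α : K) : OnePoint K))
    (hH2 : ∀ α : K, g.eval α = 0 → H α = ∞)
    (hH3 : H ∞ =
      if g.natDegree < f.natDegree then ∞
      else if f.natDegree < g.natDegree then ((0 : K) : OnePoint K)
      else ((f.leadingCoeff / g.leadingCoeff : K) : OnePoint K)) :
    H = ratioMap (max f.natDegree g.natDegree) f g := by
  funext α
  cases α with
  | infty => rw [hH3, ratioMap_infty_eq_ite hg]
  | coe x =>
    by_cases hx : g.eval x = 0
    · rw [hH2 x hx, ratioMap_coe, hx, ratio_zero_right]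
    · rw [hH1 x hx, ratioMap_coe, ratio_of_ne_zero _ hx]

theorem ncard_range_ratioMap_mul_card_le [Fintype K] {f g : K[X]} (hcop : IsCoprime f g) {n : ℕ}
    (hn : n = max f.natDegree g.natDegree) (G : Subgroup (RatFunc K ≃ₐ[K] RatFunc K)) [Finite G]
    (hG : ∀ σ ∈ G, σ (algebraMap K[X] (RatFunc K) f / algebraMap K[X] (RatFunc K) g) =
      algebraMap K[X] (RatFunc K) f / algebraMap K[X] (RatFunc K) g) :
    (Set.range (ratioMap n f g)).ncard * Nat.card G ≤
      Nat.card (OnePoint K) + (Nat.card G - 1) * 2 := by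
  classical
  let ρ : G →* PGL(2, K) := RatFunc.autToPGL.comp G.subtype
  let _ : MulAction G (OnePoint K) := MulAction.compHom _ ρ
  have hinv : ∀ (σ : G) (α : OnePoint K), ratioMap n f g (σ • α) = ratioMap n f g α := by
    refine smul_invariant_of_forall_coe fun σ x => ?_
    obtain ⟨γ, hγ⟩ := RatFunc.exists_mobius (σ : RatFunc K ≃ₐ[K] RatFunc K)⁻¹
    change ratioMap n f g (RatFunc.autToPGL (σ : RatFunc K ≃ₐ[K] RatFunc K) • (x : OnePoint K)) = _
    rw [RatFunc.autToPGL_eq hγ, Matrix.ProjGenLinGroup.mk_smul_onePoint]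
    exact ratioMap_smul_coe hcop hn (σ := ((σ : RatFunc K ≃ₐ[K] RatFunc K)⁻¹).toAlgHom) hγ
      (hG _ (G.inv_mem σ.2)) x
  have hfix : ∀ σ : G, σ ≠ 1 → (MulAction.fixedBy (OnePoint K) σ).ncard ≤ 2 := fun σ hσ =>
    Matrix.ProjGenLinGroup.ncard_fixedBy_le_two
      ((map_ne_one_iff ρ (RatFunc.autToPGL_injective.comp Subtype.val_injective)).mpr hσ)
  exact (Nat.mul_le_mul_right _ (MulAction.ncard_range_le_card_orbits hinv)).trans
    (MulAction.card_orbits_mul_card_le hfix)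

end Polynomial

/-- Bartoli–Borges–Quoos: if `h = f/g ∈ F_q(x)` with `f, g` coprime, `n = deg h ≥ 1`, and
`F_q(x)/F_q(h)` is Galois of degree `n`, then the value set
`V_h = {h(α) : α ∈ P¹(F_q)} ⊆ P¹(F_q)` satisfies `⌈(q+1)/n⌉ ≤ #V_h ≤ ⌈(q+1)/n⌉ + 1`. -/
theorem stmt_6 (Fq : Type*) [Field Fq] [Fintype Fq]
    (f g : Polynomial Fq) (hcop : IsCoprime f g)
    (n : ℕ) (hn : n = max f.natDegree g.natDegree) (h1 : 1 ≤ n)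
    (t : RatFunc Fq)
    (ht : t = algebraMap (Polynomial Fq) (RatFunc Fq) f /
      algebraMap (Polynomial Fq) (RatFunc Fq) g)
    (hGal : IsGalois ↥(IntermediateField.adjoin Fq {t}) (RatFunc Fq))
    (hdeg : Module.finrank ↥(IntermediateField.adjoin Fq {t}) (RatFunc Fq) = n)
    (H : OnePoint Fq → OnePoint Fq)
    (hH1 : ∀ α : Fq, g.eval α ≠ 0 → H α = ((f.eval α / g.eval α : Fq) : OnePoint Fq))
    (hH2 : ∀ α : Fq, g.eval α = 0 → H α = OnePoint.infty)
    (hH3 : H OnePoint.infty =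
      if g.natDegree < f.natDegree then OnePoint.infty
      else if f.natDegree < g.natDegree then ((0 : Fq) : OnePoint Fq)
      else ((f.leadingCoeff / g.leadingCoeff : Fq) : OnePoint Fq)) :
    (Fintype.card Fq + n) / n ≤ (Set.range H).ncard ∧
      (Set.range H).ncard ≤ (Fintype.card Fq + n) / n + 1 := by
  have hg0 : g ≠ 0 := by
    rintro rfl
    simp [natDegree_eq_zero_of_isUnit (isCoprime_zero_right.mp hcop)] at hn
    omega
  obtain rfl : H = ratioMap n f g := hn ▸ eq_ratioMap hg0 hH1 hH2 hH3
  set E := IntermediateField.adjoin Fq {t}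
  have : FiniteDimensional E (RatFunc Fq) := Module.finite_of_finrank_pos (by omega)
  have hcardG : Nat.card E.fixingSubgroup = n := by
    rw [Nat.card_congr E.fixingSubgroupEquiv.toEquiv, IsGalois.card_aut_eq_finrank, hdeg]
  have : Finite E.fixingSubgroup := Nat.finite_of_card_ne_zero (by omega)
  have hcardP : Nat.card (OnePoint Fq) = Fintype.card Fq + 1 :=
    Nat.card_eq_fintype_card.trans Fintype.card_option
  have hupper := ncard_range_ratioMap_mul_card_le hcop hn E.fixingSubgroup fun σ hσ =>
    ht ▸ (IntermediateField.mem_fixingSubgroup_iff E σ).mp hσ t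
      (IntermediateField.mem_adjoin_simple_self Fq t)
  have hlower := Nat.card_le_mul_ncard_range (ncard_preimage_ratioMap_le hcop hn (by omega))
  rw [hcardG, hcardP] at hupper
  rw [hcardP] at hlower
  exact ⟨Nat.add_div_le_of_succ_le_mul (by omega) hlower,
    Nat.le_add_div_add_one_of_mul_le (by omega) hupper⟩
end

section
/- Let f ∈ F_q[x] be a non-constant polynomial such that the field extension F_q(x)/F_q(f(x)) is Galois. Then f is a minimal value set polynomial, i.e., the value set V_f' = { f(α) : α ∈ F_q } has cardinality ⌈q / deg f⌉ + ε with ε ∈ {0, 1} and in fact #V_f' ≥ ⌊(q−1)/deg f⌋ + 1 with equality characterizing minimality. -/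
/-!
Put `n = deg f`, `L = F_q(x)` and `K = F_q(f(x))`. Since `[L : K] = n`, the polynomial
`f(T) - f(x)` is, up to the leading coefficient of `f`, the minimal polynomial of `x` over `K`;
the Galois hypothesis makes it split over `L` into `n` distinct factors `T - r`. Each root `r`
is a root of the monic polynomial `(f(T) - f(x)) / lc f` over the UFD `F_q[x]`, so `r = p(x)` for
a polynomial `p` with `f ∘ p = f`, and such a `p` has degree one.

Specialising `x ↦ α` shows that `f(T) - f(α)` splits over `F_q` with roots the `p(α)`. Now count
the pairs `(p, α)` with `p(α) = α`. For fixed `α` their number is the multiplicity of `α` as a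
root of `f(T) - f(α)`, and these multiplicities add up to `n` over each fibre of `f`; so there
are `n · #V` pairs. For fixed `p`, the identity fixes all `q` points and every other affine `p`
fixes at most one. Hence `n · #V = q + s` with `0 ≤ s < n`.
-/

open Polynomial IntermediateField Finset

theorem Nat.eq_div_add_one_of_mul_eq_add {n v q s : ℕ} (h : n * v = q + s) (hs : s < n)
    (hq : 0 < q) : v = (q - 1) / n + 1 := by
  obtain ⟨k, rfl⟩ : ∃ k, v = k + 1 := Nat.exists_eq_add_one.2 (Nat.pos_of_ne_zero (by
    rintro rfl
    omega))
  rw [mul_add, mul_one, mul_comm] at h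
  rw [Nat.div_eq_of_lt_le (k := k) (by omega) (by rw [add_mul, one_mul]; omega)]

namespace Polynomial

section CommRing

variable {R : Type*} [CommRing R]

theorem eval_map_C_sub_C (f p : R[X]) : (f.map C - C f).eval p = f.comp p - f := by
  rw [eval_sub, eval_map, eval_C]
  rfl

theorem map_evalRingHom_map_C_sub_C (f : R[X]) (a : R) :
    (f.map C - C f).map (evalRingHom a) = f - C (f.eval a) := by
  have : (evalRingHom a).comp C = RingHom.id R := by ext; simp
  rw [Polynomial.map_sub, Polynomial.map_map, map_C, this, map_id, coe_evalRingHom]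

theorem comp_eq_of_mem_of_map_C_sub_C_eq {f : R[X]} {P : Finset R[X]}
    (hP : f.map C - C f = C (C f.leadingCoeff) * ∏ p ∈ P, (X - C p))
    {p : R[X]} (hp : p ∈ P) : f.comp p = f := by
  rw [← sub_eq_zero, ← eval_map_C_sub_C, hP, eval_mul, eval_prod,
    prod_eq_zero hp (by rw [eval_sub, eval_X, eval_C, sub_self]), mul_zero]

theorem sub_C_eval_eq_of_map_C_sub_C_eq {f : R[X]} {P : Finset R[X]}
    (hP : f.map C - C f = C (C f.leadingCoeff) * ∏ p ∈ P, (X - C p)) (a : R) :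
    f - C (f.eval a) = C f.leadingCoeff * ∏ p ∈ P, (X - C (p.eval a)) := by
  rw [← map_evalRingHom_map_C_sub_C, hP]
  simp [Polynomial.map_prod]

theorem X_mem_of_map_C_sub_C_eq [IsDomain R] {f : R[X]} (hf : f ≠ 0) {P : Finset R[X]}
    (hP : f.map C - C f = C (C f.leadingCoeff) * ∏ p ∈ P, (X - C p)) : X ∈ P := by
  have := eval_map_C_sub_C f X
  rw [comp_X, sub_self, hP, eval_mul, eval_C, mul_eq_zero, C_eq_zero, eval_prod,
    prod_eq_zero_iff] at this
  obtain ⟨p, hp, hpX⟩ := this.resolve_left (leadingCoeff_ne_zero.2 hf)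
  rw [eval_sub, eval_X, eval_C, sub_eq_zero] at hpX
  rwa [hpX]

theorem roots_sub_C_eval_of_map_C_sub_C_eq [IsDomain R] {f : R[X]} (hf : f ≠ 0)
    {P : Finset R[X]} (hP : f.map C - C f = C (C f.leadingCoeff) * ∏ p ∈ P, (X - C p)) (a : R) :
    (f - C (f.eval a)).roots = P.val.map (eval a) := by
  have : ∏ p ∈ P, (X - C (p.eval a)) = ((P.val.map (eval a)).map (X - C ·)).prod := by
    rw [Multiset.map_map]; rfl
  rw [sub_C_eval_eq_of_map_C_sub_C_eq hP, roots_C_mul _ (leadingCoeff_ne_zero.2 hf), this,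
    roots_multiset_prod_X_sub_C]

end CommRing

section Field

variable {K : Type*} [Field K]

theorem natDegree_eq_one_of_comp_eq {f p : K[X]} (hf : 0 < f.natDegree) (h : f.comp p = f) :
    p.natDegree = 1 :=
  Nat.eq_of_mul_eq_mul_left hf (by rw [← natDegree_comp, h, mul_one])

variable [Fintype K] [DecidableEq K]

theorem card_filter_eval_eq_self_le_one {p : K[X]} (hp : p.natDegree ≤ 1) (hpX : p ≠ X) :
    #{α | p.eval α = α} ≤ 1 := calc
  #{α | p.eval α = α} ≤ #(p - X).roots.toFinset := by
    refine card_le_card fun α hα => ?_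
    rw [Multiset.mem_toFinset, mem_roots (sub_ne_zero.2 hpX)]
    simpa [sub_eq_zero] using hα
  _ ≤ (p - X).natDegree := (Multiset.toFinset_card_le _).trans (card_roots' _)
  _ ≤ 1 := (natDegree_sub_le _ _).trans (max_le hp natDegree_X_le)

theorem sum_rootMultiplicity_sub_C_eval {f : K[X]}
    (hsplit : ∀ α, Multiset.card (f - C (f.eval α)).roots = f.natDegree) :
    ∑ α, rootMultiplicity α (f - C (f.eval α)) = f.natDegree * #(univ.image f.eval) := by
  rw [← sum_fiberwise_of_maps_to (fun α _ => mem_image_of_mem f.eval (mem_univ α)), mul_comm,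
    ← smul_eq_mul, ← sum_const]
  refine sum_congr rfl fun v hv => ?_
  obtain ⟨α₀, -, rfl⟩ := mem_image.1 hv
  rw [← hsplit α₀, ← Multiset.sum_count_eq_card (s := {α | f.eval α = f.eval α₀}) ?_]
  · refine sum_congr rfl fun α hα => ?_
    rw [count_roots, (mem_filter.1 hα).2]
  · intro α hα
    have := (mem_roots'.1 hα).2
    simp_all [sub_eq_zero]

theorem card_image_eval_of_map_C_sub_C_eq {f : K[X]} (hf : 0 < f.natDegree) {P : Finset K[X]}
    (hP : f.map C - C f = C (C f.leadingCoeff) * ∏ p ∈ P, (X - C p)) :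
    #(univ.image f.eval) = (Fintype.card K - 1) / f.natDegree + 1 := by
  have hf0 : f ≠ 0 := ne_zero_of_natDegree_gt hf
  have hX : X ∈ P := X_mem_of_map_C_sub_C_eq hf0 hP
  have hroots := roots_sub_C_eval_of_map_C_sub_C_eq hf0 hP
  have hcard : #P = f.natDegree := by
    simpa [natDegree_C_mul (leadingCoeff_ne_zero.2 hf0)] using
      (congrArg natDegree (sub_C_eval_eq_of_map_C_sub_C_eq hP 0)).symm
  have hpairs : f.natDegree * #(univ.image f.eval) =
      Fintype.card K + ∑ p ∈ P.erase X, #{α | p.eval α = α} := calc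
    _ = ∑ α, rootMultiplicity α (f - C (f.eval α)) := by
      refine (sum_rootMultiplicity_sub_C_eval fun α => ?_).symm
      rw [hroots, Multiset.card_map, card_val, hcard]
    _ = ∑ α, #{p ∈ P | p.eval α = α} := by
      simp only [← count_roots, hroots, Multiset.count_map]
      refine sum_congr rfl fun α _ => ?_
      simp only [card_def, filter_val, eq_comm]
    _ = ∑ p ∈ P, #{α | p.eval α = α} := by
      simp only [card_filter]
      exact sum_comm
    _ = _ := by
      rw [← add_sum_erase _ _ hX]
      simp
  refine Nat.eq_div_add_one_of_mul_eq_add hpairs ?_ Fintype.card_pos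
  calc ∑ p ∈ P.erase X, #{α | p.eval α = α} ≤ #(P.erase X) • 1 :=
        sum_le_card_nsmul _ _ _ fun p hp => card_filter_eval_eq_self_le_one
          (natDegree_eq_one_of_comp_eq hf
            (comp_eq_of_mem_of_map_C_sub_C_eq hP (mem_of_mem_erase hp))).le
          (ne_of_mem_erase hp)
    _ < f.natDegree := by
      rw [smul_eq_mul, mul_one, card_erase_of_mem hX, hcard]
      omega

end Field

end Polynomial

section RatFunc

variable {K : Type*} [Field K]

theorem exists_algebraMap_eq_of_aeval_eq_algebraMap {f : K[X]} (hf : 0 < f.natDegree)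
    {s : RatFunc K} {c : K[X]} (h : aeval s f = algebraMap K[X] (RatFunc K) c) :
    ∃ p : K[X], algebraMap K[X] (RatFunc K) p = s := by
  have hlc : f.leadingCoeff ≠ 0 := leadingCoeff_ne_zero.2 (ne_zero_of_natDegree_gt hf)
  set g : K[X] := C f.leadingCoeff⁻¹ * f
  have hg : g.Monic := monic_C_mul_of_mul_leadingCoeff_eq_one (inv_mul_cancel₀ hlc)
  have hmonic : (g.map C - C (C f.leadingCoeff⁻¹ * c)).Monic :=
    (hg.map C).sub_of_left (by
      rw [degree_map, degree_C_mul (inv_ne_zero hlc)]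
      exact degree_C_le.trans_lt (by simpa [← natDegree_pos_iff_degree_pos]))
  obtain ⟨p, hp, -⟩ := exists_integer_of_is_root_of_monic hmonic (r := s) (by
    rw [aeval_def, RatFunc.algebraMap_eq_C] at h
    simp [g, h, aeval_def, eval₂_map])
  exact ⟨p, hp.symm⟩

theorem finrank_adjoin_algebraMap (f : K[X]) :
    Module.finrank K⟮algebraMap K[X] (RatFunc K) f⟯ (RatFunc K) = f.natDegree := by
  rw [RatFunc.finrank_eq_max_natDegree, RatFunc.num_algebraMap, RatFunc.denom_algebraMap,
    natDegree_one, max_eq_left (Nat.zero_le _)]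

theorem isIntegral_X_adjoin_algebraMap {f : K[X]} (hf : 0 < f.natDegree) :
    IsIntegral K⟮algebraMap K[X] (RatFunc K) f⟯ (RatFunc.X : RatFunc K) :=
  have : FiniteDimensional K⟮algebraMap K[X] (RatFunc K) f⟯ (RatFunc K) :=
    Module.finite_of_finrank_pos (by rwa [finrank_adjoin_algebraMap])
  .of_finite _ _

theorem map_sub_C_eq_C_mul_minpoly {f : K[X]} (hf : 0 < f.natDegree) :
    f.map (algebraMap K (RatFunc K)) - C (algebraMap K[X] (RatFunc K) f) =
      C (algebraMap K (RatFunc K) f.leadingCoeff) *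
        (minpoly K⟮algebraMap K[X] (RatFunc K) f⟯ (RatFunc.X : RatFunc K)).map
          (algebraMap K⟮algebraMap K[X] (RatFunc K) f⟯ (RatFunc K)) := by
  set t := algebraMap K[X] (RatFunc K) f
  set E := K⟮t⟯
  have hint : IsIntegral E (RatFunc.X : RatFunc K) := isIntegral_X_adjoin_algebraMap hf
  set g : E[X] := f.map (algebraMap K E) - C ⟨t, mem_adjoin_simple_self K t⟩
  have hg : aeval (RatFunc.X : RatFunc K) g = 0 := by
    simp [g, t, aeval_map_algebraMap]
  have hgdeg : g.natDegree = f.natDegree := by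
    rw [natDegree_sub_C, natDegree_map]
  have hmin : (minpoly E (RatFunc.X : RatFunc K)).natDegree = f.natDegree := by
    rw [← adjoin.finrank hint, (RatFunc.IntermediateField.adjoinXEquiv E).toLinearEquiv.finrank_eq,
      finrank_adjoin_algebraMap]
  have hfac := eq_leadingCoeff_mul_of_monic_of_dvd_of_natDegree_le (minpoly.monic hint)
    (minpoly.dvd E _ hg) (hgdeg.trans hmin.symm).le
  have hlc : g.leadingCoeff = algebraMap K E f.leadingCoeff := by
    rw [leadingCoeff_sub_of_degree_lt, leadingCoeff_map]
    rw [degree_map]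
    exact degree_C_le.trans_lt (by rwa [← natDegree_pos_iff_degree_pos])
  have := congrArg (Polynomial.map (algebraMap E (RatFunc K))) hfac
  rw [hlc] at this
  simpa [g, Polynomial.map_map, ← IsScalarTower.algebraMap_eq] using this

theorem exists_finset_map_C_sub_C_eq_C_mul_prod {f : K[X]} (hf : 0 < f.natDegree)
    [IsGalois K⟮algebraMap K[X] (RatFunc K) f⟯ (RatFunc K)] :
    ∃ P : Finset K[X], f.map C - C f = C (C f.leadingCoeff) * ∏ p ∈ P, (X - C p) := by
  classical
  set φ := algebraMap K[X] (RatFunc K)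
  set E := K⟮φ f⟯
  have hφ : Function.Injective φ := RatFunc.algebraMap_injective K
  have hint : IsIntegral E (RatFunc.X : RatFunc K) := isIntegral_X_adjoin_algebraMap hf
  set R := ((minpoly E (RatFunc.X : RatFunc K)).map (algebraMap E (RatFunc K))).roots
  have hR : (minpoly E (RatFunc.X : RatFunc K)).map (algebraMap E (RatFunc K)) =
      (R.map (X - C ·)).prod :=
    (Normal.splits inferInstance _).eq_prod_roots_of_monic ((minpoly.monic hint).map _)
  have hRnodup : R.Nodup :=
    nodup_roots (Separable.map (Algebra.IsSeparable.isSeparable E (RatFunc.X : RatFunc K)))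
  have hRφ : ∀ r ∈ R, r ∈ Set.range φ := by
    intro r hr
    have := congrArg (eval r) (map_sub_C_eq_C_mul_minpoly hf)
    rw [eval_mul, (mem_roots (map_ne_zero (minpoly.ne_zero hint))).1 hr, mul_zero, eval_sub,
      eval_C, eval_map_algebraMap, sub_eq_zero] at this
    exact exists_algebraMap_eq_of_aeval_eq_algebraMap hf this
  refine ⟨R.toFinset.preimage φ hφ.injOn, map_injective φ hφ ?_⟩
  have hφC : φ.comp C = algebraMap K (RatFunc K) := by
    rw [← Polynomial.algebraMap_eq, ← IsScalarTower.algebraMap_eq]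
  simp only [Polynomial.map_mul, Polynomial.map_prod, Polynomial.map_sub, Polynomial.map_map,
    map_C, map_X, hφC]
  rw [Finset.prod_preimage φ R.toFinset hφ.injOn (fun r => X - C r)
    (fun r hr hr' => absurd (hRφ r (Multiset.mem_toFinset.1 hr)) hr'),
    map_sub_C_eq_C_mul_minpoly hf, hR, ← RingHom.comp_apply φ C, hφC,
    Finset.prod_eq_multiset_prod, Multiset.toFinset_val, Multiset.dedup_eq_self.2 hRnodup]

end RatFunc

/-- If `f ∈ F_q[x]` is non-constant and `F_q(x)/F_q(f(x))` is Galois, then `f` is a minimal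
value set polynomial: `#{f(α) : α ∈ F_q} = ⌊(q−1)/deg f⌋ + 1`. -/
theorem stmt_7 (Fq : Type*) [Field Fq] [Fintype Fq] [DecidableEq Fq]
    (f : Polynomial Fq) (hdeg : 0 < f.natDegree)
    (hGal : IsGalois
      ↥(IntermediateField.adjoin Fq {algebraMap (Polynomial Fq) (RatFunc Fq) f})
      (RatFunc Fq)) :
    (Finset.image (fun α => f.eval α) Finset.univ).card =
      (Fintype.card Fq - 1) / f.natDegree + 1 := by
  obtain ⟨P, hP⟩ := exists_finset_map_C_sub_C_eq_C_mul_prod hdeg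
  exact card_image_eval_of_map_C_sub_C_eq hdeg hP
end

section
/- Let f ∈ F_q[x] be a minimal value set polynomial with value set V' = { f(α) : α ∈ F_q }, where #V' > 2 or #V' = 2 = char(F_q). Let T(x) = ∏_{γ ∈ V'} (x − γ). Then there exists θ ∈ F_q* such that T(f(x)) = θ (x^q − x) f'(x) in F_q[x], where f' is the formal derivative of f. -/
/-!
Since `f` maps `F_q` into its value set `V`, `T ∘ f` vanishes on `F_q`, so
`T ∘ f = (X^q - X) * g`, and minimality of the value set forces `deg g < deg f`.
Differentiating gives `g(x) = -T'(f x) * f'(x)` for every `x ∈ F_q`. The hypothesis on `#V`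
provides `k ≠ 0` with `deg k, deg R ≤ #V - 2`, where `R = k T' mod T`; then
`k(f) * g + R(f) * f'` vanishes on `F_q` and has degree `< q`, so it is zero. After dividing
`k` and `R` by their gcd, `k(f)` and `R(f)` are coprime with degrees divisible by `deg f`, while
`g` and `f'` have degree `< deg f`; hence `k` and `R` are constants and `g` is a multiple of `f'`.
-/

open Polynomial

namespace Polynomial

section Domain

variable {R : Type*} [CommRing R] [IsDomain R]

lemma comp_ne_zero_of_natDegree_pos {p f : R[X]} (hp : p ≠ 0) (hf : 0 < f.natDegree) :
    p.comp f ≠ 0 := by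
  rw [Ne, comp_eq_zero_iff, not_or, not_and]
  exact ⟨hp, fun _ hC => hf.ne' (by rw [hC, natDegree_C])⟩

lemma natDegree_eq_zero_of_comp_dvd {p f h : R[X]} (hdvd : p.comp f ∣ h) (hh : h ≠ 0)
    (hhf : h.natDegree < f.natDegree) : p.natDegree = 0 := by
  have := natDegree_le_of_dvd hdvd hh
  rw [natDegree_comp] at this
  by_contra hp
  nlinarith [Nat.pos_of_ne_zero hp]

end Domain

section Field

variable {K : Type*} [Field K]

lemma exists_eq_C_mul_of_isCoprime {f g h k r : K[X]}
    (hkr : IsCoprime (k.comp f) (r.comp f)) (hk : k ≠ 0) (hg : g ≠ 0)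
    (hgf : g.natDegree < f.natDegree) (hhf : h.natDegree < f.natDegree)
    (H : k.comp f * g + r.comp f * h = 0) : ∃ c, g = C c * h := by
  have hf : 0 < f.natDegree := (Nat.zero_le _).trans_lt hgf
  have hkf : k.comp f ≠ 0 := comp_ne_zero_of_natDegree_pos hk hf
  have hh : h ≠ 0 := by
    rintro rfl
    rw [mul_zero, add_zero] at H
    exact mul_ne_zero hkf hg H
  have hk_dvd : k.comp f ∣ h :=
    hkr.dvd_of_dvd_mul_left ⟨-g, by linear_combination H⟩
  have hr_dvd : r.comp f ∣ g :=
    hkr.symm.dvd_of_dvd_mul_left ⟨-h, by linear_combination H⟩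
  obtain ⟨κ, rfl⟩ : ∃ κ, k = C κ :=
    ⟨_, eq_C_of_natDegree_eq_zero (natDegree_eq_zero_of_comp_dvd hk_dvd hh hhf)⟩
  obtain ⟨ρ, rfl⟩ : ∃ ρ, r = C ρ :=
    ⟨_, eq_C_of_natDegree_eq_zero (natDegree_eq_zero_of_comp_dvd hr_dvd hg hgf)⟩
  have hκ : κ ≠ 0 := by rintro rfl; exact hk C_0
  refine ⟨-(ρ / κ), ?_⟩
  rw [C_comp, C_comp] at H
  apply mul_left_cancel₀ (C_ne_zero.mpr hκ)
  rw [← mul_assoc, ← C_mul, mul_neg, mul_div_cancel₀ ρ hκ, C_neg]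
  linear_combination H

lemma exists_eq_C_mul_of_comp_mul_add_comp_mul_eq_zero {f g h k r : K[X]} (hk : k ≠ 0)
    (hg : g ≠ 0) (hgf : g.natDegree < f.natDegree) (hhf : h.natDegree < f.natDegree)
    (H : k.comp f * g + r.comp f * h = 0) : ∃ c, g = C c * h := by
  classical
  obtain ⟨k', r', hk', hr', hunit⟩ := extract_gcd k r
  set d := gcd k r
  have hd : d ≠ 0 := fun hd => hk (by rw [hk', hd, zero_mul])
  have hdf : d.comp f ≠ 0 := comp_ne_zero_of_natDegree_pos hd ((Nat.zero_le _).trans_lt hgf)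
  refine exists_eq_C_mul_of_isCoprime (((gcd_isUnit_iff _ _).mp hunit).map (compRingHom f))
    (right_ne_zero_of_mul (hk' ▸ hk)) hg hgf hhf (mul_left_cancel₀ hdf ?_)
  rw [hk', hr', mul_comp, mul_comp] at H
  linear_combination H

lemma exists_natDegree_le_one_coeff_mul_modByMonic_eq_zero (p T : K[X]) (n : ℕ) :
    ∃ k : K[X], k ≠ 0 ∧ k.natDegree ≤ 1 ∧ ((k * p) %ₘ T).coeff n = 0 := by
  set u := ((X * p) %ₘ T).coeff n
  set v := (p %ₘ T).coeff n
  by_cases hv : v = 0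
  · exact ⟨1, one_ne_zero, by simp, by rwa [one_mul]⟩
  -- `C v * X - C u` is in the kernel of the linear functional `k ↦ ((k * p) %ₘ T).coeff n`.
  refine ⟨C v * X - C u, fun h0 => hv (by simpa using congrArg (coeff · 1) h0), ?_, ?_⟩
  · exact (natDegree_sub_le _ _).trans (by simp [natDegree_C_mul_X _ hv])
  · have : (C v * X - C u) * p = v • (X * p) - u • p := by simp only [smul_eq_C_mul]; ring
    rw [this, sub_modByMonic, smul_modByMonic, smul_modByMonic, coeff_sub, coeff_smul,
      coeff_smul, smul_eq_mul, smul_eq_mul, mul_comm, sub_self]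

lemma exists_natDegree_mul_derivative_modByMonic_le {T : K[X]} (hT : T.Monic)
    (hdeg : 2 < T.natDegree ∨ (T.natDegree = 2 ∧ ringChar K = 2)) :
    ∃ k : K[X], k ≠ 0 ∧ k.natDegree ≤ T.natDegree - 2 ∧
      ((k * derivative T) %ₘ T).natDegree ≤ T.natDegree - 2 := by
  rcases hdeg with hdeg | ⟨hdeg, hchar⟩
  · obtain ⟨k, hk, hk1, hcoeff⟩ :=
      exists_natDegree_le_one_coeff_mul_modByMonic_eq_zero (derivative T) T (T.natDegree - 1)
    have hT1 : T ≠ 1 := fun h => by simp [h] at hdeg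
    refine ⟨k, hk, by omega, ?_⟩
    have := natDegree_le_pred
      (Nat.le_sub_one_of_lt (natDegree_modByMonic_lt (k * derivative T) hT hT1)) hcoeff
    omega
  · refine ⟨1, one_ne_zero, by simp, ?_⟩
    rw [one_mul, (modByMonic_eq_self_iff hT).mpr (degree_derivative_lt hT.ne_zero), hdeg]
    have h2 : (2 : K) = 0 := by
      have := ringChar.charP K
      rw [hchar] at this
      exact_mod_cast CharP.cast_eq_zero K 2
    refine natDegree_le_pred (n := 1) ((natDegree_derivative_le T).trans (by omega)) ?_
    simp [coeff_derivative, one_add_one_eq_two, h2]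

end Field

section FiniteField

variable {K : Type*} [Field K] [Fintype K]

lemma X_pow_card_sub_X_dvd_of_forall_eval_eq_zero {p : K[X]} (hp : ∀ x, p.eval x = 0) :
    X ^ Fintype.card K - X ∣ p := by
  have hq := Fintype.one_lt_card (α := K)
  have hmonic : (X ^ Fintype.card K - X : K[X]).Monic :=
    monic_X_pow_sub (by rw [degree_X]; exact_mod_cast hq)
  have hdeg := FiniteField.X_pow_card_sub_X_natDegree_eq K hq
  rw [← modByMonic_eq_zero_iff_dvd hmonic]
  apply eq_zero_of_natDegree_lt_card_of_eval_eq_zero' _ Finset.univ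
  · intro x _
    rw [← coe_aeval_eq_eval, aeval_modByMonic_eq_self_of_root, coe_aeval_eq_eval, hp]
    simp only [map_sub, map_pow, aeval_X, FiniteField.pow_card, sub_self]
  · rw [Finset.card_univ]
    refine (natDegree_modByMonic_lt _ hmonic fun h => ?_).trans_eq hdeg
    rw [h, natDegree_one] at hdeg
    omega

lemma eval_eq_neg_of_comp_eq_X_pow_card_sub_X_mul {T f g : K[X]}
    (h : T.comp f = (X ^ Fintype.card K - X) * g) (x : K) :
    g.eval x = -((derivative T).eval (f.eval x) * (derivative f).eval x) := by
  have := congrArg (eval x ∘ derivative) h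
  simp only [Function.comp_apply, derivative_comp, derivative_mul, derivative_sub,
    derivative_X_pow, derivative_X, Nat.cast_card_eq_zero, map_zero, zero_mul, zero_sub, neg_mul,
    one_mul, eval_mul, eval_comp, eval_add, eval_neg, eval_sub, eval_pow, eval_X,
    FiniteField.pow_card, sub_self, add_zero] at this
  linear_combination this

lemma comp_mul_add_modByMonic_comp_mul_eq_zero {T f g k : K[X]} {d : ℕ}
    (h : T.comp f = (X ^ Fintype.card K - X) * g) (hg : g.natDegree < f.natDegree)
    (hk : k.natDegree ≤ d) (hR : ((k * derivative T) %ₘ T).natDegree ≤ d)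
    (hq : (d + 1) * f.natDegree ≤ Fintype.card K) :
    k.comp f * g + ((k * derivative T) %ₘ T).comp f * derivative f = 0 := by
  apply eq_zero_of_natDegree_lt_card_of_eval_eq_zero' _ Finset.univ
  · intro x _
    have hroot : aeval (f.eval x) T = 0 := by
      rw [coe_aeval_eq_eval, ← eval_comp, h, eval_mul]
      simp [FiniteField.pow_card]
    rw [eval_add, eval_mul, eval_mul, eval_comp, eval_comp, ← coe_aeval_eq_eval,
      aeval_modByMonic_eq_self_of_root hroot, aeval_mul, coe_aeval_eq_eval,
      eval_eq_neg_of_comp_eq_X_pow_card_sub_X_mul h x]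
    ring
  · have hcomp : ∀ p : K[X], p.natDegree ≤ d → (p.comp f).natDegree ≤ d * f.natDegree :=
      fun p hp => natDegree_comp.trans_le (Nat.mul_le_mul_right _ hp)
    have := natDegree_add_le_of_degree_le
      (natDegree_mul_le_of_le (hcomp k hk) (Nat.le_sub_one_of_lt hg))
      (natDegree_mul_le_of_le (hcomp _ hR) (natDegree_derivative_le f))
    rw [add_mul, one_mul] at hq
    rw [Finset.card_univ]
    generalize d * f.natDegree = N at *
    omega

end FiniteField

end Polynomial

/-- Borges' characterization: let `f ∈ F_q[x]` be a minimal value set polynomial with value set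
`V'`, where `#V' > 2` or `#V' = 2 = char F_q`.  Let `T(x) = ∏_{γ ∈ V'} (x − γ)`.  Then there is
`θ ∈ F_q*` with `T(f(x)) = θ (x^q − x) f'(x)`. -/
theorem stmt_8 (Fq : Type*) [Field Fq] [Fintype Fq] [DecidableEq Fq]
    (f : Polynomial Fq) (hdeg : 0 < f.natDegree)
    (V : Finset Fq) (hV : V = Finset.image (fun α => f.eval α) Finset.univ)
    (hmin : V.card = (Fintype.card Fq - 1) / f.natDegree + 1)
    (hbig : 2 < V.card ∨ (V.card = 2 ∧ ringChar Fq = 2))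
    (T : Polynomial Fq) (hT : T = ∏ γ ∈ V, (Polynomial.X - Polynomial.C γ)) :
    ∃ θ : Fq, θ ≠ 0 ∧
      T.comp f = Polynomial.C θ * (Polynomial.X ^ Fintype.card Fq - Polynomial.X) *
        Polynomial.derivative f := by
  have hT_monic : T.Monic := hT ▸ monic_prod_of_monic _ _ fun γ _ => monic_X_sub_C γ
  have hT_deg : T.natDegree = V.card := hT ▸ natDegree_finsetProd_X_sub_C_eq_card V id
  obtain ⟨g, hg⟩ := X_pow_card_sub_X_dvd_of_forall_eval_eq_zero (p := T.comp f) fun x => by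
    rw [eval_comp, hT, eval_prod]
    exact Finset.prod_eq_zero (hV ▸ Finset.mem_image_of_mem _ (Finset.mem_univ x)) (by simp)
  have hg0 : g ≠ 0 := by
    rintro rfl
    exact comp_ne_zero_of_natDegree_pos hT_monic.ne_zero hdeg (by rw [hg, mul_zero])
  have hmn : V.card * f.natDegree ≤ Fintype.card Fq - 1 + f.natDegree := by
    rw [hmin, add_mul, one_mul]
    exact Nat.add_le_add_right (Nat.div_mul_le_self _ _) _
  have hg_deg : g.natDegree < f.natDegree := by
    have hq := Fintype.one_lt_card (α := Fq)
    have := congrArg natDegree hg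
    rw [natDegree_comp, natDegree_mul (FiniteField.X_pow_card_sub_X_ne_zero Fq hq) hg0,
      FiniteField.X_pow_card_sub_X_natDegree_eq Fq hq, hT_deg] at this
    omega
  obtain ⟨k, hk0, hk_deg, hR_deg⟩ := exists_natDegree_mul_derivative_modByMonic_le hT_monic
    (hT_deg ▸ hbig)
  have hkR := comp_mul_add_modByMonic_comp_mul_eq_zero hg hg_deg hk_deg hR_deg <| by
    have hm2 : 2 ≤ V.card := by rcases hbig with h | ⟨h, _⟩ <;> omega
    rw [hT_deg, show V.card - 2 + 1 = V.card - 1 by omega, Nat.sub_mul, one_mul]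
    generalize V.card * f.natDegree = N at *
    omega
  obtain ⟨c, hc⟩ := exists_eq_C_mul_of_comp_mul_add_comp_mul_eq_zero hk0 hg0 hg_deg
    ((natDegree_derivative_le f).trans_lt (by omega)) hkR
  exact ⟨c, fun hc0 => hg0 (by rw [hc, hc0, C_0, zero_mul]), by rw [hg, hc]; ring⟩
end

section
/- Let f₁, f₂ ∈ F_q[x] be polynomials admitting θ₁, θ₂ ∈ F_q* and a common monic polynomial T ∈ F_q[x] with T(f₁(x)) = θ₁ (x^q − x) f₁'(x) and T(f₂(y)) = θ₂ (y^q − y) f₂'(y), and suppose θ₁ = θ₂. Then the polynomial F(x, y) = f₁(x) − f₂(y) divides (x^q − x) ∂F/∂x + (y^q − y) ∂F/∂y in F_q[x, y]. -/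
open MvPolynomial

/-!
Write `F = u - v` with `u = f₁(x)` and `v = f₂(y)`. Since `∂F/∂x = f₁'(x)` and `∂F/∂y = -f₂'(y)`,
the hypotheses evaluated at `x` and `y` say that `θ · ((x^q - x) ∂F/∂x + (y^q - y) ∂F/∂y)` equals
`T(u) - T(v)`, which is divisible by `u - v`; and `θ` is a unit.
-/

namespace MvPolynomial

variable {R σ : Type*} [CommSemiring R]

theorem pderiv_aeval_X_self (i : σ) (f : Polynomial R) :
    pderiv i (Polynomial.aeval (X i : MvPolynomial σ R) f) =
      Polynomial.aeval (X i) (Polynomial.derivative f) := by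
  rw [Derivation.comp_aeval_eq, pderiv_X_self, smul_eq_mul, mul_one]

theorem pderiv_aeval_X_of_ne {i j : σ} (h : i ≠ j) (f : Polynomial R) :
    pderiv j (Polynomial.aeval (X i : MvPolynomial σ R) f) = 0 := by
  rw [Derivation.comp_aeval_eq, pderiv_X_of_ne h, smul_zero]

end MvPolynomial

theorem Polynomial.sub_dvd_aeval_sub {R S : Type*} [CommSemiring R] [CommRing S] [Algebra R S]
    (a b : S) (p : Polynomial R) : a - b ∣ aeval a p - aeval b p := by
  simpa only [aeval_def, eval₂_eq_eval_map] using sub_dvd_eval_sub a b (p.map (algebraMap R S))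

theorem sub_dvd_sub_of_aeval_eq_mul {R S : Type*} [CommSemiring R] [CommRing S] [Algebra R S]
    {T : Polynomial R} {u v c P Q : S} (hc : IsUnit c)
    (hu : Polynomial.aeval u T = c * P) (hv : Polynomial.aeval v T = c * Q) : u - v ∣ P - Q := by
  have h := Polynomial.sub_dvd_aeval_sub u v T
  rwa [hu, hv, ← mul_sub, hc.dvd_mul_left] at h

theorem stmt_9_general (Fq : Type*) [Field Fq] [Fintype Fq]
    (f₁ f₂ T : Polynomial Fq) (θ₁ θ₂ : Fq) (hθ₁ : θ₁ ≠ 0)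
    (hT₁ : T.comp f₁ = Polynomial.C θ₁ * (Polynomial.X ^ Fintype.card Fq - Polynomial.X) *
      Polynomial.derivative f₁)
    (hT₂ : T.comp f₂ = Polynomial.C θ₂ * (Polynomial.X ^ Fintype.card Fq - Polynomial.X) *
      Polynomial.derivative f₂)
    (hθ : θ₁ = θ₂)
    (F : MvPolynomial (Fin 2) Fq)
    (hF : F = Polynomial.aeval (X 0) f₁ - Polynomial.aeval (X 1) f₂) :
    F ∣ (X 0 ^ Fintype.card Fq - X 0) * pderiv 0 F +
      (X 1 ^ Fintype.card Fq - X 1) * pderiv 1 F := by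
  subst hθ hF
  have eval_at {f : Polynomial Fq} (i : Fin 2)
      (hT : T.comp f = Polynomial.C θ₁ * (Polynomial.X ^ Fintype.card Fq - Polynomial.X) *
        Polynomial.derivative f) :
      Polynomial.aeval (Polynomial.aeval (X i : MvPolynomial (Fin 2) Fq) f) T =
        C θ₁ * ((X i ^ Fintype.card Fq - X i) *
          Polynomial.aeval (X i) (Polynomial.derivative f)) := by
    simpa [Polynomial.aeval_comp, mul_assoc] using
      congrArg (Polynomial.aeval (X i : MvPolynomial (Fin 2) Fq)) hT
  have h := sub_dvd_sub_of_aeval_eq_mul ((isUnit_iff_ne_zero.mpr hθ₁).map C)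
    (eval_at 0 hT₁) (eval_at 1 hT₂)
  simpa [pderiv_aeval_X_self, pderiv_aeval_X_of_ne, sub_eq_add_neg] using h

/-- If `f₁, f₂ ∈ F_q[x]` admit `θ₁, θ₂ ∈ F_q*` and a common monic `T` with
`T(fᵢ) = θᵢ (x^q − x) fᵢ'` and `θ₁ = θ₂`, then `F(x,y) = f₁(x) − f₂(y)` divides
`(x^q − x) F_x + (y^q − y) F_y` in `F_q[x,y]`. -/
theorem stmt_9 (Fq : Type*) [Field Fq] [Fintype Fq]
    (f₁ f₂ T : Polynomial Fq) (θ₁ θ₂ : Fq) (hθ₁ : θ₁ ≠ 0) (hθ₂ : θ₂ ≠ 0)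
    (hTmonic : T.Monic)
    (hT₁ : T.comp f₁ = Polynomial.C θ₁ * (Polynomial.X ^ Fintype.card Fq - Polynomial.X) *
      Polynomial.derivative f₁)
    (hT₂ : T.comp f₂ = Polynomial.C θ₂ * (Polynomial.X ^ Fintype.card Fq - Polynomial.X) *
      Polynomial.derivative f₂)
    (hθ : θ₁ = θ₂)
    (F : MvPolynomial (Fin 2) Fq)
    (hF : F = Polynomial.aeval (X 0) f₁ - Polynomial.aeval (X 1) f₂) :
    F ∣ (X 0 ^ Fintype.card Fq - X 0) * pderiv 0 F +
      (X 1 ^ Fintype.card Fq - X 1) * pderiv 1 F :=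
  stmt_9_general Fq f₁ f₂ T θ₁ θ₂ hθ₁ hT₁ hT₂ hθ F hF
end

section
/- Let q' and q be prime powers with F_{q'} ⊆ F_q and n = (q−1)/(q'−1). The Fermat curve x^n + y^n + 1 = 0 over F_q is q-Frobenius nonclassical, i.e., f₀ = x^n + y^n + 1 divides (x^q − x)·n x^{n−1} + (y^q − y)·n y^{n−1} in F_q[x, y]. -/
open MvPolynomial

/-!
Write `q' = #F` and `q = #K = q' ^ [K : F]`, so that `q' - 1 ∣ q - 1` and `n (q' - 1) = q - 1`,
i.e. `q + (n - 1) = n q'`. Then `(x ^ q - x) · n x ^ (n - 1) = n ((x ^ n) ^ q' - x ^ n)`, and since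
raising to the power `q'` is additive in characteristic `p` and fixes `1`, the sum of the two terms
is `n (f₀ ^ q' - f₀)`, which `f₀` divides.
-/

theorem FiniteField.card_sub_one_dvd_card_sub_one (F K : Type*) [Field F] [Fintype F] [Field K]
    [Fintype K] [Algebra F K] : Fintype.card F - 1 ∣ Fintype.card K - 1 := by
  rw [Module.card_eq_pow_finrank (K := F) (V := K)]
  simpa using Nat.sub_dvd_pow_sub_pow (Fintype.card F) 1 (Module.finrank F K)

theorem Nat.add_pred_div_eq_div_mul {q q' : ℕ} (hq : 1 < q) (hq' : 1 < q')
    (h : q' - 1 ∣ q - 1) :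
    0 < (q - 1) / (q' - 1) ∧ q + ((q - 1) / (q' - 1) - 1) = (q - 1) / (q' - 1) * q' := by
  obtain ⟨n, hn⟩ := h
  rw [hn, Nat.mul_div_cancel_left _ (by omega)]
  rcases n with _ | m
  · omega
  obtain ⟨r, rfl⟩ : ∃ r, q' = r + 1 := ⟨q' - 1, by omega⟩
  obtain ⟨s, rfl⟩ : ∃ s, q = s + 1 := ⟨q - 1, by omega⟩
  simp only [Nat.add_sub_cancel] at hn ⊢
  exact ⟨m.succ_pos, by rw [hn]; ring⟩

theorem pow_sub_self_mul_pow_pred {R : Type*} [CommRing R] (x : R) {n q q' : ℕ} (hn : 0 < n)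
    (h : q + (n - 1) = n * q') : (x ^ q - x) * x ^ (n - 1) = (x ^ n) ^ q' - x ^ n := by
  rw [sub_mul, ← pow_add, h, pow_mul, ← pow_succ', Nat.sub_add_cancel hn]

theorem add_pow_add_one_dvd_of_add_pred_eq_mul_card {F R : Type*} [Field F] [Fintype F]
    [CommRing R] [Algebra F R] (x y : R) {n q : ℕ} (hn : 0 < n)
    (h : q + (n - 1) = n * Fintype.card F) :
    x ^ n + y ^ n + 1 ∣ (x ^ q - x) * (n * x ^ (n - 1)) + (y ^ q - y) * (n * y ^ (n - 1)) := by
  have hfrob : (x ^ n + y ^ n + 1) ^ Fintype.card F =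
      (x ^ n) ^ Fintype.card F + (y ^ n) ^ Fintype.card F + 1 := by
    change FiniteField.frobeniusAlgHom F R (x ^ n + y ^ n + 1) =
      FiniteField.frobeniusAlgHom F R (x ^ n) + FiniteField.frobeniusAlgHom F R (y ^ n) + 1
    rw [map_add, map_add, map_one]
  have hsum : (x ^ q - x) * (n * x ^ (n - 1)) + (y ^ q - y) * (n * y ^ (n - 1)) =
      n * ((x ^ n + y ^ n + 1) ^ Fintype.card F - (x ^ n + y ^ n + 1)) := by
    rw [hfrob]
    linear_combination (n : R) * pow_sub_self_mul_pow_pred x hn h +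
      (n : R) * pow_sub_self_mul_pow_pred y hn h
  rw [hsum]
  exact (dvd_sub (dvd_pow_self _ Fintype.card_ne_zero) dvd_rfl).mul_left _

/-- Let `F_{q'} ⊆ F_q` and `n = (q−1)/(q'−1)`.  The Fermat curve `x^n + y^n + 1 = 0` over
`F_q` is `q`-Frobenius nonclassical: `x^n + y^n + 1` divides
`(x^q − x)·n x^{n−1} + (y^q − y)·n y^{n−1}` in `F_q[x,y]`. -/
theorem stmt_14 (K : Type*) [Field K] [Fintype K] (F : Subfield K) [Fintype ↥F]
    (n : ℕ) (hn : n = (Fintype.card K - 1) / (Fintype.card ↥F - 1))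
    (f₀ : MvPolynomial (Fin 2) K) (hf₀ : f₀ = X 0 ^ n + X 1 ^ n + 1) :
    f₀ ∣ (X 0 ^ Fintype.card K - X 0) * ((n : MvPolynomial (Fin 2) K) * X 0 ^ (n - 1)) +
      (X 1 ^ Fintype.card K - X 1) * ((n : MvPolynomial (Fin 2) K) * X 1 ^ (n - 1)) := by
  obtain ⟨hpos, hexp⟩ := Nat.add_pred_div_eq_div_mul Fintype.one_lt_card Fintype.one_lt_card
    (FiniteField.card_sub_one_dvd_card_sub_one F K)
  subst hn hf₀
  exact add_pow_add_one_dvd_of_add_pred_eq_mul_card (F := F) _ _ hpos hexp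
end

section
/- Let K be a field, and x, y elements of an extension field with f₁(x) = f₂(y) for non-constant polynomials f₁, f₂ ∈ K[x]. If [K(x, y) : K(y)] = deg f₁, then the polynomial f₁(X) − f₂(y) ∈ K(y)[X] is irreducible over K(y) and is the minimal polynomial of x over K(y); consequently f₁(x) − f₂(y) ∈ K[x, y] is irreducible in K[x, y]. -/
/-!
`F = f₁(X) - f₂(y)` annihilates `x` and has degree `deg f₁ = [K(y)(x) : K(y)]`, the degree of
the minimal polynomial of `x`, so it is a nonzero multiple of that minimal polynomial and hence
irreducible. The bivariate polynomial `f₁(X) - f₂(t) ∈ K[t][X]` specializes to `F` under `t ↦ y`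
and its leading coefficient, that of `f₁`, is a unit; so a factorization of it specializes
without loss of degree, and irreducibility of `F` lifts to `K[t][X] ≃ K[x, y]`.
-/

open Polynomial

theorem minpoly.eq_C_leadingCoeff_mul_of_natDegree_le {A B : Type*} [Field A] [Ring B]
    [Algebra A B] {x : B} (hx : IsIntegral A x) {p : A[X]} (hp : Polynomial.aeval x p = 0)
    (hdeg : p.natDegree ≤ (minpoly A x).natDegree) :
    p = C p.leadingCoeff * minpoly A x :=
  eq_leadingCoeff_mul_of_monic_of_dvd_of_natDegree_le (minpoly.monic hx) (minpoly.dvd A x hp) hdeg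

theorem Polynomial.irreducible_of_irreducible_map_of_isUnit_leadingCoeff {R S : Type*}
    [CommRing R] [IsDomain R] [CommRing S] [IsDomain S] (φ : R →+* S) {f : R[X]}
    (hf : IsUnit f.leadingCoeff) (h_irr : Irreducible (f.map φ)) : Irreducible f := by
  refine ⟨h_irr.not_isUnit ∘ IsUnit.map (mapRingHom φ), fun a b h => ?_⟩
  have hab : IsUnit (a.leadingCoeff * b.leadingCoeff) := by rwa [← leadingCoeff_mul, ← h]
  refine (h_irr.isUnit_or_isUnit <| (congr_arg (map φ) h).trans (Polynomial.map_mul φ)).imp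
    ?_ ?_ <;> apply isUnit_of_isUnit_leadingCoeff_of_isUnit_map
  · exact isUnit_of_mul_isUnit_left hab
  · exact isUnit_of_mul_isUnit_right hab

namespace Polynomial.Bivariate

variable {R : Type*} [CommRing R]

theorem equivMvPolynomial_C (f : R[X]) :
    equivMvPolynomial R (C f) = aeval (MvPolynomial.X 0) f := by
  induction f using Polynomial.induction_on' with
  | add p q hp hq => simp_all
  | monomial n a => simp [← C_mul_X_pow_eq_monomial]

theorem equivMvPolynomial_map_C (f : R[X]) :
    equivMvPolynomial R (f.map C) = aeval (MvPolynomial.X 1) f := by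
  induction f using Polynomial.induction_on' with
  | add p q hp hq => simp_all
  | monomial n a => simp [← C_mul_X_pow_eq_monomial]

theorem irreducible_aeval_X_zero_sub_aeval_X_one {f g : R[X]}
    (h : Irreducible (f.map C - C g)) :
    Irreducible (aeval (MvPolynomial.X 0) f - aeval (MvPolynomial.X 1) g :
      MvPolynomial (Fin 2) R) := by
  let e := (equivMvPolynomial R).trans (MvPolynomial.renameEquiv R (Equiv.swap 0 1))
  have he : e (f.map C - C g) = aeval (MvPolynomial.X 0) f - aeval (MvPolynomial.X 1) g := by
    simp [e, equivMvPolynomial_C, equivMvPolynomial_map_C, ← aeval_algHom_apply]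
  rw [← he]
  exact (MulEquiv.irreducible_iff e).mpr h

end Polynomial.Bivariate

theorem stmt_18_general (K L : Type*) [Field K] [Field L] [Algebra K L]
    (f₁ f₂ : Polynomial K) (hd₁ : 0 < f₁.natDegree)
    (x y : L)
    (heq : Polynomial.aeval x f₁ = Polynomial.aeval y f₂)
    (Ky : IntermediateField K L)
    (yK : ↥Ky) (hyK : (yK : L) = y)
    (hdegx : Module.finrank ↥Ky ↥(IntermediateField.adjoin (↥Ky) {x}) = f₁.natDegree)
    (F : Polynomial ↥Ky)
    (hF : F = f₁.map (algebraMap K ↥Ky) - Polynomial.C (Polynomial.aeval yK f₂)) :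
    Irreducible F ∧ (∃ c : ↥Ky, c ≠ 0 ∧ F = Polynomial.C c * minpoly ↥Ky x) ∧
      Irreducible ((Polynomial.aeval (MvPolynomial.X 0) f₁ -
        Polynomial.aeval (MvPolynomial.X 1) f₂ : MvPolynomial (Fin 2) K)) := by
  have hFdeg : F.natDegree = f₁.natDegree := by rw [hF, natDegree_sub_C, natDegree_map]
  have hFne : F ≠ 0 := ne_zero_of_natDegree_gt (hFdeg ▸ hd₁)
  have hFx : aeval x F = 0 := by
    rw [hF, map_sub, aeval_map_algebraMap, aeval_C, heq, ← hyK, ← aeval_algebraMap_apply]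
    exact sub_self _
  have hx : IsIntegral Ky x := IsAlgebraic.isIntegral ⟨F, hFne, hFx⟩
  have hFmin : F = C F.leadingCoeff * minpoly Ky x :=
    minpoly.eq_C_leadingCoeff_mul_of_natDegree_le hx hFx
      (by rw [hFdeg, ← hdegx, IntermediateField.adjoin.finrank hx])
  have hFlc : F.leadingCoeff ≠ 0 := leadingCoeff_ne_zero.mpr hFne
  have hFirr : Irreducible F := by
    rw [hFmin, irreducible_isUnit_mul (isUnit_C.mpr hFlc.isUnit)]
    exact minpoly.irreducible hx
  refine ⟨hFirr, ⟨_, hFlc, hFmin⟩, ?_⟩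
  refine Bivariate.irreducible_aeval_X_zero_sub_aeval_X_one <|
    irreducible_of_irreducible_map_of_isUnit_leadingCoeff (aeval yK).toRingHom ?_ ?_
  · have hlt : (C f₂).degree < (f₁.map C).degree := by
      rw [degree_map_eq_of_injective C_injective]
      exact degree_C_le.trans_lt (by exact_mod_cast natDegree_pos_iff_degree_pos.mp hd₁)
    rw [leadingCoeff_sub_of_degree_lt hlt, leadingCoeff_map_of_injective C_injective]
    exact isUnit_C.mpr (leadingCoeff_ne_zero.mpr (ne_zero_of_natDegree_gt hd₁)).isUnit
  · convert hFirr
    rw [hF, Polynomial.map_sub, map_map, map_C]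
    congr 2
    ext; simp

/-- Let `K` be a field and `x, y` elements of an extension with `f₁(x) = f₂(y)` for
non-constant `f₁, f₂ ∈ K[X]`.  If `[K(x,y) : K(y)] = deg f₁`, then `f₁(X) − f₂(y) ∈ K(y)[X]`
is irreducible over `K(y)` and is (up to a nonzero scalar) the minimal polynomial of `x` over
`K(y)`; consequently `f₁(x) − f₂(y)` is irreducible in `K[x,y]`. -/
theorem stmt_18 (K L : Type*) [Field K] [Field L] [Algebra K L]
    (f₁ f₂ : Polynomial K) (hd₁ : 0 < f₁.natDegree) (hd₂ : 0 < f₂.natDegree)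
    (x y : L)
    (heq : Polynomial.aeval x f₁ = Polynomial.aeval y f₂)
    (Ky : IntermediateField K L) (hKy : Ky = IntermediateField.adjoin K {y})
    (yK : ↥Ky) (hyK : (yK : L) = y)
    (hdegx : Module.finrank ↥Ky ↥(IntermediateField.adjoin (↥Ky) {x}) = f₁.natDegree)
    (F : Polynomial ↥Ky)
    (hF : F = f₁.map (algebraMap K ↥Ky) - Polynomial.C (Polynomial.aeval yK f₂)) :
    Irreducible F ∧ (∃ c : ↥Ky, c ≠ 0 ∧ F = Polynomial.C c * minpoly ↥Ky x) ∧
      Irreducible ((Polynomial.aeval (MvPolynomial.X 0) f₁ -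
        Polynomial.aeval (MvPolynomial.X 1) f₂ : MvPolynomial (Fin 2) K)) :=
  stmt_18_general K L f₁ f₂ hd₁ x y heq Ky yK hyK hdegx F hF
end
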